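/- arXiv:1610.02519 — 3 statements merged into one kernel-verified Lean document; each statement's English description precedes it below -/
import Mathlib

section
/- There exists a constant C>0 such that for every smooth function u on ℝ^{1+2} vanishing outside the cone K and every point of K: for all α,β ∈ {0,1,2}, |∂_α∂_β u| ≤ C ( |∂_t∂_t u| + Σ_{a∈{1,2}, β'∈{0,1,2}} |∂̲_a(∂_{β'} u)| + t^{−1} Σ_{γ∈{0,1,2}} |∂_γ u| ). -/
open scoped BigOperators ContDiff
open MeasureTheory Set

noncomputable section

/-- Partial derivative `∂_μ` on `ℝ^{1+2}` (coordinates `(t,x¹,x²) = (p 0, p 1, p 2)`). -/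
def pd (μ : Fin 3) (φ : (Fin 3 → ℝ) → ℝ) : (Fin 3 → ℝ) → ℝ :=
  fun p => fderiv ℝ φ p (Pi.single μ 1)

/-- Semi-hyperboloidal frame: `∂̲_0 = ∂_t`, `∂̲_a = (x^a/t)∂_t + ∂_a` for `a = 1,2`. -/
def upd (α : Fin 3) (φ : (Fin 3 → ℝ) → ℝ) : (Fin 3 → ℝ) → ℝ :=
  fun p => if α = 0 then pd 0 φ p else (p α / p 0) * pd 0 φ p + pd α φ p

/-- Admissible vector fields: `∂_0, ∂_1, ∂_2, L_1, L_2` where `L_a = x^a ∂_t + t ∂_a`. -/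
def Zop (z : Fin 5) (φ : (Fin 3 → ℝ) → ℝ) : (Fin 3 → ℝ) → ℝ := fun p =>
  if z = 0 then pd 0 φ p
  else if z = 1 then pd 1 φ p
  else if z = 2 then pd 2 φ p
  else if z = 3 then p 1 * pd 0 φ p + p 0 * pd 1 φ p
  else p 2 * pd 0 φ p + p 0 * pd 2 φ p

/-- Composition `Z^I` of admissible vector fields; `|I|` is the length of the list. -/
def Zcomp : List (Fin 5) → ((Fin 3 → ℝ) → ℝ) → (Fin 3 → ℝ) → ℝ
  | [], φ => φ
  | z :: l, φ => Zop z (Zcomp l φ)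

/-- Composition `∂^I` of coordinate partial derivatives. -/
def pdComp : List (Fin 3) → ((Fin 3 → ℝ) → ℝ) → (Fin 3 → ℝ) → ℝ
  | [], φ => φ
  | μ :: l, φ => pd μ (pdComp l φ)

/-- `r = |x|`. -/
def rad (p : Fin 3 → ℝ) : ℝ := Real.sqrt ((p 1) ^ 2 + (p 2) ^ 2)

/-- The interior of the light cone, `K = {r < t - 1}`. -/
def inK (p : Fin 3 → ℝ) : Prop := rad p < p 0 - 1

/-- `s = √(t² - r²)`. -/
def sv (p : Fin 3 → ℝ) : ℝ := Real.sqrt ((p 0) ^ 2 - (p 1) ^ 2 - (p 2) ^ 2)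

/-- The point of the hyperboloid `H_s` lying above `x ∈ ℝ²`. -/
def hyp (s : ℝ) (x : Fin 2 → ℝ) : Fin 3 → ℝ :=
  ![Real.sqrt (s ^ 2 + (x 0) ^ 2 + (x 1) ^ 2), x 0, x 1]

/-- Membership in the hyperboloid `H_s = {t² - r² = s², t > 0}`. -/
def onH (s : ℝ) (p : Fin 3 → ℝ) : Prop :=
  (p 0) ^ 2 - (p 1) ^ 2 - (p 2) ^ 2 = s ^ 2 ∧ 0 < p 0

/-- Hyperboloidal energy `E_0(s,φ)`. -/
def E0 (s : ℝ) (φ : (Fin 3 → ℝ) → ℝ) : ℝ :=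
  ∫ x : Fin 2 → ℝ,
    ((upd 1 φ (hyp s x)) ^ 2 + (upd 2 φ (hyp s x)) ^ 2
      + ((s / hyp s x 0) * pd 0 φ (hyp s x)) ^ 2)

/-- Sum of `F(I)` over all compositions `I` of at most `N` admissible vector fields. -/
def singleSum (N : ℕ) (F : List (Fin 5) → ℝ) : ℝ :=
  ∑ j ∈ Finset.range (N + 1), ∑ I : Fin j → Fin 5, F (List.ofFn I)

/-- Hyperboloidal energy `E_m(s,φ) = Σ_{|I| ≤ m} E_0(s, Z^I φ)`. -/
def Em (m : ℕ) (s : ℝ) (φ : (Fin 3 → ℝ) → ℝ) : ℝ :=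
  singleSum m (fun I => E0 s (Zcomp I φ))

/-- Minkowski metric `diag(-1,1,1)` (upper and lower components agree). -/
def eta (μ ν : Fin 3) : ℝ := if μ = ν then (if μ = (0 : Fin 3) then -1 else 1) else 0

/-- `L²(H_s)` norm. -/
def L2Hs (s : ℝ) (u : (Fin 3 → ℝ) → ℝ) : ℝ :=
  Real.sqrt (∫ x : Fin 2 → ℝ, (u (hyp s x)) ^ 2)

/-- Sum of `F(I₁,I₂,I₃)` over all triples of compositions with `|I₁|+|I₂|+|I₃| ≤ N`. -/
def tripleSum (N : ℕ) (F : List (Fin 5) → List (Fin 5) → List (Fin 5) → ℝ) : ℝ :=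
  ∑ j₁ ∈ Finset.range (N + 1), ∑ j₂ ∈ Finset.range (N + 1), ∑ j₃ ∈ Finset.range (N + 1),
    if j₁ + j₂ + j₃ ≤ N then
      ∑ I₁ : Fin j₁ → Fin 5, ∑ I₂ : Fin j₂ → Fin 5, ∑ I₃ : Fin j₃ → Fin 5,
        F (List.ofFn I₁) (List.ofFn I₂) (List.ofFn I₃)
    else 0

/-! Inside `K` one has `|x^a| < t`, so `∂_a = ∂̲_a - (x^a/t) ∂_t` bounds every spatial derivative
by a frame derivative plus a time derivative. Applied to `∂_β u`, and, after commuting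
`∂_t ∂_a = ∂_a ∂_t`, to `∂_t u`, this controls every second derivative by `|∂_t ∂_t u|` and the
frame derivatives `∂̲_a ∂_β' u`. -/

lemma pd_pd_eq_fderiv_fderiv {u : (Fin 3 → ℝ) → ℝ} (hu : ContDiff ℝ 2 u) (μ ν : Fin 3)
    (p : Fin 3 → ℝ) :
    pd μ (pd ν u) p = fderiv ℝ (fderiv ℝ u) p (Pi.single μ 1) (Pi.single ν 1) := by
  have hd : DifferentiableAt ℝ (fderiv ℝ u) p :=
    (hu.fderiv_right (m := 1) (by norm_num)).differentiable (by norm_num) p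
  change fderiv ℝ (fun q => fderiv ℝ u q (Pi.single ν 1)) p (Pi.single μ 1) = _
  rw [fderiv_clm_apply hd (differentiableAt_const _)]
  simp

lemma pd_pd_comm {u : (Fin 3 → ℝ) → ℝ} (hu : ContDiff ℝ 2 u) (μ ν : Fin 3) (p : Fin 3 → ℝ) :
    pd μ (pd ν u) p = pd ν (pd μ u) p := by
  rw [pd_pd_eq_fderiv_fderiv hu, pd_pd_eq_fderiv_fderiv hu]
  exact hu.contDiffAt.isSymmSndFDerivAt (by simp) _ _

lemma abs_apply_lt_of_inK {p : Fin 3 → ℝ} (hp : inK p) {a : Fin 3} (ha : a ≠ 0) :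
    |p a| < p 0 := by
  have hle : |p a| ≤ rad p := by
    rw [rad, ← Real.sqrt_sq_eq_abs]
    apply Real.sqrt_le_sqrt
    fin_cases a <;> simp_all [sq_nonneg]
  have : rad p < p 0 - 1 := hp
  linarith

lemma abs_pd_le_abs_upd_add {p : Fin 3 → ℝ} (hp : inK p) {a : Fin 3} (ha : a ≠ 0)
    (φ : (Fin 3 → ℝ) → ℝ) : |pd a φ p| ≤ |upd a φ p| + |pd 0 φ p| := by
  have ht : 0 < p 0 := (abs_nonneg _).trans_lt (abs_apply_lt_of_inK hp ha)
  have hfrac : |p a / p 0| ≤ 1 := by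
    rw [abs_div, abs_of_pos ht, div_le_one ht]
    exact (abs_apply_lt_of_inK hp ha).le
  have heq : pd a φ p = upd a φ p - p a / p 0 * pd 0 φ p := by simp [upd, ha]
  calc |pd a φ p| ≤ |upd a φ p| + |p a / p 0| * |pd 0 φ p| := by
        rw [heq, ← abs_mul]; exact abs_sub _ _
    _ ≤ |upd a φ p| + |pd 0 φ p| := by
        gcongr; exact mul_le_of_le_one_left (abs_nonneg _) hfrac

lemma abs_le_sum_sum_abs {ι κ : Type*} [Fintype κ] (f : ι → κ → ℝ) {s : Finset ι} {i : ι}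
    (hi : i ∈ s) (j : κ) : |f i j| ≤ ∑ i ∈ s, ∑ j, |f i j| :=
  calc |f i j| ≤ ∑ j, |f i j| :=
        Finset.single_le_sum (fun j _ => abs_nonneg (f i j)) (Finset.mem_univ j)
    _ ≤ ∑ i ∈ s, ∑ j, |f i j| :=
        Finset.single_le_sum (fun i _ => Finset.sum_nonneg fun j _ => abs_nonneg (f i j)) hi

lemma mem_spatial_of_ne_zero {a : Fin 3} (ha : a ≠ 0) : a ∈ ({1, 2} : Finset (Fin 3)) := by
  fin_cases a <;> simp_all

section SecondDerivatives

variable {u : (Fin 3 → ℝ) → ℝ} {p : Fin 3 → ℝ}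

lemma abs_pd_zero_pd_le (hu : ContDiff ℝ 2 u) (hp : inK p) (β : Fin 3) :
    |pd 0 (pd β u) p| ≤ |pd 0 (pd 0 u) p|
      + ∑ a ∈ ({1, 2} : Finset (Fin 3)), ∑ β' : Fin 3, |upd a (pd β' u) p| := by
  by_cases hβ : β = 0
  · subst hβ
    exact le_add_of_nonneg_right (Finset.sum_nonneg fun _ _ => Finset.sum_nonneg fun _ _ =>
      abs_nonneg _)
  · rw [pd_pd_comm hu, add_comm]
    calc |pd β (pd 0 u) p| ≤ |upd β (pd 0 u) p| + |pd 0 (pd 0 u) p| :=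
          abs_pd_le_abs_upd_add hp hβ _
      _ ≤ _ := by
          gcongr
          exact abs_le_sum_sum_abs (fun a β' => upd a (pd β' u) p) (mem_spatial_of_ne_zero hβ) 0

lemma abs_pd_pd_le (hu : ContDiff ℝ 2 u) (hp : inK p) (α β : Fin 3) :
    |pd α (pd β u) p| ≤ 2 * (|pd 0 (pd 0 u) p|
      + ∑ a ∈ ({1, 2} : Finset (Fin 3)), ∑ β' : Fin 3, |upd a (pd β' u) p|) := by
  have h0 := abs_pd_zero_pd_le hu hp β
  have hS : 0 ≤ ∑ a ∈ ({1, 2} : Finset (Fin 3)), ∑ β' : Fin 3, |upd a (pd β' u) p| :=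
    Finset.sum_nonneg fun _ _ => Finset.sum_nonneg fun _ _ => abs_nonneg _
  by_cases hα : α = 0
  · subst hα
    linarith [abs_nonneg (pd 0 (pd 0 u) p)]
  · have hα' : |upd α (pd β u) p|
        ≤ ∑ a ∈ ({1, 2} : Finset (Fin 3)), ∑ β' : Fin 3, |upd a (pd β' u) p| :=
      abs_le_sum_sum_abs (fun a β' => upd a (pd β' u) p) (mem_spatial_of_ne_zero hα) β
    linarith [abs_pd_le_abs_upd_add hp hα (pd β u), abs_nonneg (pd 0 (pd 0 u) p)]

end SecondDerivatives

/-- control of second-order derivatives inside the cone. -/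
theorem second_derivative_bound :
    ∃ C > (0 : ℝ), ∀ u : (Fin 3 → ℝ) → ℝ, ContDiff ℝ ∞ u →
      (∀ p, ¬ inK p → u p = 0) →
      ∀ p : Fin 3 → ℝ, inK p → ∀ α β : Fin 3,
        |pd α (pd β u) p| ≤
          C * (|pd 0 (pd 0 u) p|
            + (∑ a ∈ ({1, 2} : Finset (Fin 3)), ∑ β' : Fin 3, |upd a (pd β' u) p|)
            + (p 0)⁻¹ * ∑ γ' : Fin 3, |pd γ' u p|) := by
  refine ⟨2, two_pos, fun u hu _ p hp α β => ?_⟩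
  have ht : 0 < p 0 := (abs_nonneg _).trans_lt (abs_apply_lt_of_inK hp one_ne_zero)
  have hlower : 0 ≤ (p 0)⁻¹ * ∑ γ' : Fin 3, |pd γ' u p| :=
    mul_nonneg (inv_nonneg.2 ht.le) (Finset.sum_nonneg fun _ _ => abs_nonneg _)
  linarith [abs_pd_pd_le (hu.of_le (WithTop.coe_le_coe.2 le_top)) hp α β]
end
end

section
/- (L^∞ bounds under the a priori energy assumption.) Let m ≥ 6, 1 < s₀ ≤ s₁, and C₁>0. There exists C₂>0, depending only on C₁ and m, such that for every ε>0 and every smooth φ on ℝ^{1+2} vanishing outside K with E_m(s,φ)^{1/2} ≤ C₁ε for all s ∈ [s₀,s₁], one has at every point of H_s ∩ K for s ∈ [s₀,s₁]: |s ∂_α Z^Jφ| ≤ C₂ε and |t ∂̲_a Z^Jφ| ≤ C₂ε for every composition Z^J of at most m−2 admissible vector fields and all α ∈ {0,1,2}, a ∈ {1,2}; and |t s ∂̲_a(∂̲_α Z^Jφ)| + |t s ∂̲_α(∂̲_a Z^Jφ)| ≤ C₂ε for every composition Z^J of at most m−3 admissible vector fields. -/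
open scoped BigOperators ContDiff
open MeasureTheory Set

noncomputable section

section generic
variable {E : Type*} [NormedAddCommGroup E] [NormedSpace ℝ E]
lemma fd_mul (f g : E → ℝ) {x : E} (hf : DifferentiableAt ℝ f x)
    (hg : DifferentiableAt ℝ g x) (e : E) :
    fderiv ℝ (fun y => f y * g y) x e = fderiv ℝ f x e * g x + f x * fderiv ℝ g x e := by
  rw [fderiv_fun_mul hf hg]
  simp only [ContinuousLinearMap.add_apply, ContinuousLinearMap.smul_apply, smul_eq_mul]
  ring
lemma fd_zero_on_open {f : E → ℝ} {x : E} {U : Set E} (hU : IsOpen U) (hx : x ∈ U)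
    (h : ∀ y ∈ U, f y = 0) : fderiv ℝ f x = 0 := by
  have he : f =ᶠ[nhds x] (fun _ => (0:ℝ)) := by
    filter_upwards [hU.mem_nhds hx] with y hy using h y hy
  rw [he.fderiv_eq]
  exact fderiv_const_apply 0
lemma contDiff_fd {f : E → ℝ} (hf : ContDiff ℝ ∞ f) (e : E) :
    ContDiff ℝ ∞ (fun x => fderiv ℝ f x e) := by
  have h := hf.fderiv_right (m := (∞ : WithTop ℕ∞)) (by exact_mod_cast le_refl _)
  exact h.clm_apply contDiff_const
end generic

lemma contDiff_pd {φ} (hφ : ContDiff ℝ ∞ φ) (μ : Fin 3) : ContDiff ℝ ∞ (pd μ φ) :=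
  contDiff_fd hφ _

lemma contDiff_coord (i : Fin 3) : ContDiff ℝ ∞ (fun p : Fin 3 → ℝ => p i) :=
  (ContinuousLinearMap.proj i : (Fin 3 → ℝ) →L[ℝ] ℝ).contDiff

lemma contDiff_Zop {φ} (hφ : ContDiff ℝ ∞ φ) (z : Fin 5) : ContDiff ℝ ∞ (Zop z φ) := by
  have h0 := contDiff_pd hφ 0
  have h1 := contDiff_pd hφ 1
  have h2 := contDiff_pd hφ 2
  unfold Zop
  fin_cases z <;> simp <;>
    first
      | exact h0
      | exact h1
      | exact h2
      | exact ((contDiff_coord 1).mul h0).add ((contDiff_coord 0).mul h1)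
      | exact ((contDiff_coord 2).mul h0).add ((contDiff_coord 0).mul h2)

lemma contDiff_Zcomp {φ} (hφ : ContDiff ℝ ∞ φ) (I : List (Fin 5)) :
    ContDiff ℝ ∞ (Zcomp I φ) := by
  induction I with
  | nil => exact hφ
  | cons z l ih => exact contDiff_Zop ih z

def Uout : Set (Fin 3 → ℝ) := {q | q 0 - 1 < rad q}

lemma isOpen_Uout : IsOpen Uout := by
  have h1 : Continuous fun q : Fin 3 → ℝ => q 0 - 1 :=
    (continuous_apply 0).sub continuous_const
  have h2 : Continuous rad := by
    apply Real.continuous_sqrt.comp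
    exact ((continuous_apply 1).pow 2).add ((continuous_apply 2).pow 2)
  exact isOpen_lt h1 h2

lemma pd_zero_on_Uout {f : (Fin 3 → ℝ) → ℝ} (hf : ∀ q ∈ Uout, f q = 0) {p : Fin 3 → ℝ}
    (hp : p ∈ Uout) (μ : Fin 3) : pd μ f p = 0 := by
  unfold pd
  rw [fd_zero_on_open isOpen_Uout hp hf]
  rfl

lemma Zcomp_zero_on_Uout {φ} (hsupp : ∀ p, ¬ inK p → φ p = 0) (I : List (Fin 5)) :
    ∀ q ∈ Uout, Zcomp I φ q = 0 := by
  induction I with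
  | nil =>
    intro q hq
    apply hsupp
    unfold inK
    unfold Uout at hq
    simp only [Set.mem_setOf_eq] at hq
    linarith
  | cons z l ih =>
    intro q hq
    show Zop z (Zcomp l φ) q = 0
    unfold Zop
    rw [pd_zero_on_Uout ih hq 0, pd_zero_on_Uout ih hq 1, pd_zero_on_Uout ih hq 2]
    simp

lemma pd_coord_mul {f : (Fin 3 → ℝ) → ℝ} {p : Fin 3 → ℝ} (hf : DifferentiableAt ℝ f p)
    (μ ν : Fin 3) :
    pd μ (fun q => q ν * f q) p = (if ν = μ then 1 else 0) * f p + p ν * pd μ f p := by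
  unfold pd
  rw [fd_mul _ _ ((contDiff_coord ν).differentiable (by norm_num)).differentiableAt hf]
  congr 1
  congr 1
  rw [show (fun q : Fin 3 → ℝ => q ν) = ⇑(ContinuousLinearMap.proj ν : (Fin 3 → ℝ) →L[ℝ] ℝ)
    from rfl, ContinuousLinearMap.fderiv]
  simp [Pi.single_apply]

lemma diffAt_inv0 {p : Fin 3 → ℝ} (h : p 0 ≠ 0) :
    HasFDerivAt (fun q : Fin 3 → ℝ => (q 0)⁻¹)
      ((-(p 0 ^ 2)⁻¹) • (ContinuousLinearMap.proj 0 : (Fin 3 → ℝ) →L[ℝ] ℝ)) p := by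
  have h1 : HasFDerivAt (fun q : Fin 3 → ℝ => q 0)
      (ContinuousLinearMap.proj 0 : (Fin 3 → ℝ) →L[ℝ] ℝ) p :=
    (ContinuousLinearMap.proj 0 : (Fin 3 → ℝ) →L[ℝ] ℝ).hasFDerivAt
  exact (hasDerivAt_inv h).comp_hasFDerivAt p h1

lemma pd_inv_mul {f : (Fin 3 → ℝ) → ℝ} {p : Fin 3 → ℝ} (h : p 0 ≠ 0)
    (hf : DifferentiableAt ℝ f p) (μ : Fin 3) :
    pd μ (fun q => (q 0)⁻¹ * f q) p
      = -((if (0:Fin 3) = μ then 1 else 0) * (p 0 ^ 2)⁻¹) * f p + (p 0)⁻¹ * pd μ f p := by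
  unfold pd
  rw [fd_mul _ _ (diffAt_inv0 h).differentiableAt hf]
  congr 1
  congr 1
  rw [(diffAt_inv0 h).fderiv]
  simp [Pi.single_apply]
  split <;> ring

lemma upd_one_eq {p : Fin 3 → ℝ} (h : p 0 ≠ 0) (v : (Fin 3 → ℝ) → ℝ) :
    upd 1 v p = (p 0)⁻¹ * Zop 3 v p := by
  have hz : Zop 3 v p = p 1 * pd 0 v p + p 0 * pd 1 v p := by simp [Zop]
  have hu : upd 1 v p = (p 1 / p 0) * pd 0 v p + pd 1 v p := by simp [upd]
  rw [hz, hu]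
  field_simp

lemma upd_two_eq {p : Fin 3 → ℝ} (h : p 0 ≠ 0) (v : (Fin 3 → ℝ) → ℝ) :
    upd 2 v p = (p 0)⁻¹ * Zop 4 v p := by
  have hz : Zop 4 v p = p 2 * pd 0 v p + p 0 * pd 2 v p := by simp [Zop]
  have hu : upd 2 v p = (p 2 / p 0) * pd 0 v p + pd 2 v p := by simp [upd]
  rw [hz, hu]
  field_simp

/-! chunk 3: derivative of hyp -/

def tfun (s : ℝ) (x : Fin 2 → ℝ) : ℝ := Real.sqrt (s ^ 2 + (x 0) ^ 2 + (x 1) ^ 2)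

lemma hyp_zero (s : ℝ) (x : Fin 2 → ℝ) : hyp s x 0 = tfun s x := rfl
lemma hyp_one (s : ℝ) (x : Fin 2 → ℝ) : hyp s x 1 = x 0 := rfl
lemma hyp_two (s : ℝ) (x : Fin 2 → ℝ) : hyp s x 2 = x 1 := rfl

lemma Qpos {s : ℝ} (hs : 0 < s) (x : Fin 2 → ℝ) : 0 < s ^ 2 + (x 0) ^ 2 + (x 1) ^ 2 := by
  nlinarith [sq_nonneg (x 0), sq_nonneg (x 1)]

lemma tfun_pos {s : ℝ} (hs : 0 < s) (x : Fin 2 → ℝ) : 0 < tfun s x :=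
  Real.sqrt_pos.mpr (Qpos hs x)

lemma tfun_sq {s : ℝ} (hs : 0 < s) (x : Fin 2 → ℝ) :
    tfun s x ^ 2 = s ^ 2 + (x 0) ^ 2 + (x 1) ^ 2 :=
  Real.sq_sqrt (Qpos hs x).le

lemma tfun_ge_s {s : ℝ} (hs : 0 < s) (x : Fin 2 → ℝ) : s ≤ tfun s x := by
  have h : Real.sqrt (s ^ 2) ≤ tfun s x :=
    Real.sqrt_le_sqrt (by nlinarith [sq_nonneg (x 0), sq_nonneg (x 1)])
  rwa [Real.sqrt_sq hs.le] at h

lemma abs_coord_le_tfun {s : ℝ} (hs : 0 < s) (x : Fin 2 → ℝ) (a : Fin 2) :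
    |x a| ≤ tfun s x := by
  have key : (x a) ^ 2 ≤ s ^ 2 + (x 0) ^ 2 + (x 1) ^ 2 := by
    have h0 := sq_nonneg (x 0); have h1 := sq_nonneg (x 1); have h2 := sq_nonneg s
    match a with
    | 0 => linarith
    | 1 => linarith
  have h : Real.sqrt ((x a) ^ 2) ≤ tfun s x := Real.sqrt_le_sqrt key
  rwa [Real.sqrt_sq_eq_abs] at h

def proj2 (a : Fin 2) : (Fin 2 → ℝ) →L[ℝ] ℝ := ContinuousLinearMap.proj a

def Dt (s : ℝ) (x : Fin 2 → ℝ) : (Fin 2 → ℝ) →L[ℝ] ℝ :=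
  (1 / (2 * tfun s x)) • ((2 * x 0) • proj2 0 + (2 * x 1) • proj2 1)

lemma hasFDerivAt_tfun {s : ℝ} (hs : 0 < s) (x : Fin 2 → ℝ) :
    HasFDerivAt (tfun s) (Dt s x) x := by
  have h0 : HasFDerivAt (fun y : Fin 2 → ℝ => (y 0) ^ 2) ((2 * x 0) • proj2 0) x := by
    have := (hasDerivAt_pow 2 (x 0)).comp_hasFDerivAt x (proj2 0).hasFDerivAt
    simpa [proj2, Function.comp_def] using this
  have h1 : HasFDerivAt (fun y : Fin 2 → ℝ => (y 1) ^ 2) ((2 * x 1) • proj2 1) x := by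
    have := (hasDerivAt_pow 2 (x 1)).comp_hasFDerivAt x (proj2 1).hasFDerivAt
    simpa [proj2, Function.comp_def] using this
  have hQ : HasFDerivAt (fun y : Fin 2 → ℝ => s ^ 2 + (y 0) ^ 2 + (y 1) ^ 2)
      ((2 * x 0) • proj2 0 + (2 * x 1) • proj2 1) x := by
    have := ((hasFDerivAt_const (s ^ 2) x).add h0).add h1
    rw [zero_add] at this; exact this
  have hsq := (Real.hasDerivAt_sqrt (ne_of_gt (Qpos hs x))).comp_hasFDerivAt x hQ
  unfold Dt tfun
  exact hsq

lemma Dt_apply {s : ℝ} (hs : 0 < s) (x : Fin 2 → ℝ) (a : Fin 2) :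
    Dt s x (Pi.single a 1) = x a / tfun s x := by
  have ht := (tfun_pos hs x).ne'
  fin_cases a <;>
    simp [Dt, proj2, Pi.single_apply] <;> field_simp <;> ring

def Dhyp (s : ℝ) (x : Fin 2 → ℝ) : (Fin 2 → ℝ) →L[ℝ] (Fin 3 → ℝ) :=
  ContinuousLinearMap.pi (fun i => ![Dt s x, proj2 0, proj2 1] i)

lemma hasFDerivAt_hyp {s : ℝ} (hs : 0 < s) (x : Fin 2 → ℝ) :
    HasFDerivAt (hyp s) (Dhyp s x) x := by
  apply hasFDerivAt_pi''
  intro i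
  have hproj : ∀ i, (ContinuousLinearMap.proj i).comp (Dhyp s x)
      = ![Dt s x, proj2 0, proj2 1] i := fun i => ContinuousLinearMap.proj_pi _ i
  rw [hproj]
  fin_cases i
  · exact hasFDerivAt_tfun hs x
  · exact (proj2 0).hasFDerivAt
  · exact (proj2 1).hasFDerivAt

lemma Dhyp_single {s : ℝ} (hs : 0 < s) (x : Fin 2 → ℝ) (a : Fin 2) :
    Dhyp s x (Pi.single a 1)
      = (x a / tfun s x) • (Pi.single (0 : Fin 3) (1:ℝ) : Fin 3 → ℝ)
        + (Pi.single a.succ (1:ℝ) : Fin 3 → ℝ) := by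
  funext i
  have hDt := Dt_apply hs x a
  fin_cases a <;> fin_cases i <;>
    simp_all [Dhyp, proj2, Pi.single_apply, ContinuousLinearMap.pi_apply]

lemma pd_comp_hyp {s : ℝ} (hs : 0 < s) {v : (Fin 3 → ℝ) → ℝ} (x : Fin 2 → ℝ)
    (hv : DifferentiableAt ℝ v (hyp s x)) (a : Fin 2) :
    fderiv ℝ (fun y => v (hyp s y)) x (Pi.single a 1) = upd a.succ v (hyp s x) := by
  have hc : HasFDerivAt (fun y => v (hyp s y))
      ((fderiv ℝ v (hyp s x)).comp (Dhyp s x)) x :=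
    (hv.hasFDerivAt.comp x (hasFDerivAt_hyp hs x))
  rw [hc.fderiv]
  have : (fderiv ℝ v (hyp s x)).comp (Dhyp s x) (Pi.single a 1)
      = fderiv ℝ v (hyp s x) (Dhyp s x (Pi.single a 1)) := rfl
  rw [this, Dhyp_single hs x a, map_add, _root_.map_smul]
  have hupd : upd a.succ v (hyp s x)
      = (hyp s x a.succ / hyp s x 0) * pd 0 v (hyp s x) + pd a.succ v (hyp s x) := by
    unfold upd
    rw [if_neg (Fin.succ_ne_zero a)]
  rw [hupd]
  have hcoord : hyp s x a.succ = x a := by fin_cases a <;> rfl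
  rw [hcoord, hyp_zero]
  unfold pd
  simp [smul_eq_mul]

/-! chunk 4: 2D calculus and integration infrastructure -/

def pd2 (a : Fin 2) (F : (Fin 2 → ℝ) → ℝ) : (Fin 2 → ℝ) → ℝ :=
  fun x => fderiv ℝ F x (Pi.single a 1)

lemma contDiff_pd2 {F} (hF : ContDiff ℝ ∞ F) (a : Fin 2) : ContDiff ℝ ∞ (pd2 a F) :=
  contDiff_fd hF _

lemma pd2_mul {f g : (Fin 2 → ℝ) → ℝ} {x} (hf : DifferentiableAt ℝ f x)
    (hg : DifferentiableAt ℝ g x) (a : Fin 2) :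
    pd2 a (fun y => f y * g y) x = pd2 a f x * g x + f x * pd2 a g x :=
  fd_mul f g hf hg _

lemma pd2_zero_on_open {f : (Fin 2 → ℝ) → ℝ} {V : Set (Fin 2 → ℝ)} (hV : IsOpen V)
    (h : ∀ y ∈ V, f y = 0) {x} (hx : x ∈ V) (a : Fin 2) : pd2 a f x = 0 := by
  unfold pd2
  rw [fd_zero_on_open hV hx h]
  rfl

lemma hasDerivAt_slice0 {F : (Fin 2 → ℝ) → ℝ} (hF : DifferentiableAt ℝ F ![a, b]) :
    HasDerivAt (fun τ => F ![τ, b]) (pd2 0 F ![a, b]) a := by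
  have hι : HasDerivAt (fun τ : ℝ => (![τ, b] : Fin 2 → ℝ)) (Pi.single 0 1) a := by
    rw [hasDerivAt_pi]
    intro i
    fin_cases i
    · simpa using hasDerivAt_id' a
    · simpa using hasDerivAt_const a b
  exact hF.hasFDerivAt.comp_hasDerivAt a hι

lemma hasDerivAt_slice1 {F : (Fin 2 → ℝ) → ℝ} (hF : DifferentiableAt ℝ F ![a, b]) :
    HasDerivAt (fun σ => F ![a, σ]) (pd2 1 F ![a, b]) b := by
  have hι : HasDerivAt (fun σ : ℝ => (![a, σ] : Fin 2 → ℝ)) (Pi.single 1 1) b := by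
    rw [hasDerivAt_pi]
    intro i
    fin_cases i
    · simpa using hasDerivAt_const b a
    · simpa using hasDerivAt_id' b
  exact hF.hasFDerivAt.comp_hasDerivAt b hι

/-- `L²`-type integral. -/
def Nsq (g : (Fin 2 → ℝ) → ℝ) : ℝ := ∫ y, (g y) ^ 2

lemma Nsq_nonneg (g) : 0 ≤ Nsq g := integral_nonneg (fun y => sq_nonneg _)

def toPair (g : (Fin 2 → ℝ) → ℝ) : ℝ × ℝ → ℝ := fun z => g ![z.1, z.2]

lemma symm_finTwoArrow (p : ℝ × ℝ) :
    (MeasurableEquiv.finTwoArrow (α := ℝ)).symm p = ![p.1, p.2] := by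
  funext i
  fin_cases i <;> rfl

lemma integral_toPair (g : (Fin 2 → ℝ) → ℝ) : ∫ z : ℝ × ℝ, toPair g z = ∫ y, g y := by
  have h := ((volume_preserving_finTwoArrow ℝ).symm).integral_comp
    (MeasurableEquiv.measurableEmbedding _) g
  rw [← h]
  congr 1

lemma integrable_toPair {g : (Fin 2 → ℝ) → ℝ} (hg : Integrable g) :
    Integrable (toPair g) := by
  have h := ((volume_preserving_finTwoArrow ℝ).symm).integrable_comp_emb
    (MeasurableEquiv.measurableEmbedding _) (g := g)
  have h2 : Integrable (g ∘ (MeasurableEquiv.finTwoArrow (α := ℝ)).symm) := h.mpr hg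
  have he : toPair g = g ∘ (MeasurableEquiv.finTwoArrow (α := ℝ)).symm := by
    funext z
    show g ![z.1, z.2] = g ((MeasurableEquiv.finTwoArrow (α := ℝ)).symm z)
    rw [symm_finTwoArrow]
  rwa [he]

lemma iterated_integral {g : (Fin 2 → ℝ) → ℝ} (hg : Integrable g) :
    ∫ y, g y = ∫ τ, ∫ σ, g ![τ, σ] := by
  rw [← integral_toPair g]
  have hvol : (volume : Measure (ℝ × ℝ)) = Measure.prod volume volume :=
    Measure.volume_eq_prod ℝ ℝ
  rw [hvol] at *
  rw [integral_prod _ (by rw [← hvol]; exact integrable_toPair hg)]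
  rfl

lemma iterated_integral' {g : (Fin 2 → ℝ) → ℝ} (hg : Integrable g) :
    ∫ y, g y = ∫ σ, ∫ τ, g ![τ, σ] := by
  rw [iterated_integral hg]
  have hvol : (volume : Measure (ℝ × ℝ)) = Measure.prod volume volume :=
    Measure.volume_eq_prod ℝ ℝ
  exact integral_integral_swap (f := fun τ σ => g ![τ, σ])
    (by rw [← hvol]; exact integrable_toPair hg)

lemma integrable_slice_fun {g : (Fin 2 → ℝ) → ℝ} (hg : Integrable g) :
    Integrable (fun τ => ∫ σ, g ![τ, σ]) := by
  have hvol : (volume : Measure (ℝ × ℝ)) = Measure.prod volume volume :=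
    Measure.volume_eq_prod ℝ ℝ
  exact Integrable.integral_prod_left (f := fun z : ℝ × ℝ => g ![z.1, z.2])
    (by rw [← hvol]; exact integrable_toPair hg)

lemma integrable_slice_fun' {g : (Fin 2 → ℝ) → ℝ} (hg : Integrable g) :
    Integrable (fun σ => ∫ τ, g ![τ, σ]) := by
  have hvol : (volume : Measure (ℝ × ℝ)) = Measure.prod volume volume :=
    Measure.volume_eq_prod ℝ ℝ
  exact Integrable.integral_prod_right (f := fun z : ℝ × ℝ => g ![z.1, z.2])
    (by rw [← hvol]; exact integrable_toPair hg)

/-! chunk 5a -/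

def Vout (R : ℝ) : Set (Fin 2 → ℝ) := {y | R ^ 2 < (y 0) ^ 2 + (y 1) ^ 2}

lemma isOpen_Vout (R : ℝ) : IsOpen (Vout R) :=
  isOpen_lt continuous_const (((continuous_apply 0).pow 2).add ((continuous_apply 1).pow 2))

lemma hasCompactSupport_of_Vout {g : (Fin 2 → ℝ) → ℝ} {R : ℝ}
    (hsupp : ∀ y ∈ Vout R, g y = 0) : HasCompactSupport g := by
  apply HasCompactSupport.intro (isCompact_closedBall (0 : Fin 2 → ℝ) |R|)
  intro y hy
  simp only [Metric.mem_closedBall, dist_zero_right, not_le] at hy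
  apply hsupp
  show R ^ 2 < (y 0) ^ 2 + (y 1) ^ 2
  by_contra hc
  push_neg at hc
  have h0 : ∀ i : Fin 2, ‖y i‖ ≤ |R| := by
    intro i
    have hsq : (y i) ^ 2 ≤ R ^ 2 := by
      have := sq_nonneg (y 0); have := sq_nonneg (y 1)
      match i with
      | 0 => linarith
      | 1 => linarith
    show |y i| ≤ |R|
    nlinarith [abs_nonneg (y i), abs_nonneg R, sq_abs (y i), sq_abs R]
  exact absurd ((pi_norm_le_iff_of_nonneg (abs_nonneg R)).mpr h0) (not_le.mpr hy)

lemma integrable_of_Vout {g : (Fin 2 → ℝ) → ℝ} {R : ℝ} (hcont : Continuous g)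
    (hsupp : ∀ y ∈ Vout R, g y = 0) : Integrable g :=
  hcont.integrable_of_hasCompactSupport (hasCompactSupport_of_Vout hsupp)

lemma continuous_mk0 (b : ℝ) : Continuous fun τ : ℝ => (![τ, b] : Fin 2 → ℝ) := by
  apply continuous_pi
  intro i
  fin_cases i
  · simpa using continuous_id'
  · simpa using continuous_const

lemma continuous_mk1 (a : ℝ) : Continuous fun σ : ℝ => (![a, σ] : Fin 2 → ℝ) := by
  apply continuous_pi
  intro i
  fin_cases i
  · simpa using continuous_const
  · simpa using continuous_id'

lemma sq_lt_of_outside {M τ : ℝ} (hM : 0 ≤ M) (hτ : τ ∉ Set.Icc (-M) M) : M ^ 2 < τ ^ 2 := by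
  simp only [Set.mem_Icc, not_and_or, not_le] at hτ
  rcases hτ with h | h <;> nlinarith

lemma integrable_slice0 {g : (Fin 2 → ℝ) → ℝ} {R : ℝ} (hcont : Continuous g)
    (hsupp : ∀ y ∈ Vout R, g y = 0) (b : ℝ) : Integrable (fun τ => g ![τ, b]) := by
  apply Continuous.integrable_of_hasCompactSupport (hcont.comp (continuous_mk0 b))
  apply HasCompactSupport.intro (isCompact_Icc (a := -|R|) (b := |R|))
  intro τ hτ
  apply hsupp
  show R ^ 2 < (![τ, b] 0) ^ 2 + (![τ, b] 1) ^ 2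
  have h1 : |R| ^ 2 < τ ^ 2 := sq_lt_of_outside (abs_nonneg R) hτ
  have : (![τ, b] 0) = τ := rfl
  have h2 : (![τ, b] 1) = b := rfl
  rw [this, h2, ← sq_abs R]
  nlinarith [sq_nonneg b]

lemma integrable_slice1 {g : (Fin 2 → ℝ) → ℝ} {R : ℝ} (hcont : Continuous g)
    (hsupp : ∀ y ∈ Vout R, g y = 0) (a : ℝ) : Integrable (fun σ => g ![a, σ]) := by
  apply Continuous.integrable_of_hasCompactSupport (hcont.comp (continuous_mk1 a))
  apply HasCompactSupport.intro (isCompact_Icc (a := -|R|) (b := |R|))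
  intro σ hσ
  apply hsupp
  show R ^ 2 < (![a, σ] 0) ^ 2 + (![a, σ] 1) ^ 2
  have h1 : |R| ^ 2 < σ ^ 2 := sq_lt_of_outside (abs_nonneg R) hσ
  have h2 : (![a, σ] 0) = a := rfl
  have h3 : (![a, σ] 1) = σ := rfl
  rw [h2, h3, ← sq_abs R]
  nlinarith [sq_nonneg a]

lemma line0 {F : (Fin 2 → ℝ) → ℝ} {R : ℝ} (hF : ContDiff ℝ ∞ F) (hR : 0 ≤ R)
    (hsupp : ∀ y ∈ Vout R, F y = 0) (a b : ℝ) :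
    |F ![a, b]| ≤ ∫ τ, |pd2 0 F ![τ, b]| := by
  set M := R + 1 with hMdef
  have hdF : ∀ y, DifferentiableAt ℝ F y :=
    fun y => (hF.differentiable (by norm_num)).differentiableAt
  have hcontD : Continuous (pd2 0 F) := (contDiff_pd2 hF 0).continuous
  have hsD : ∀ y ∈ Vout R, pd2 0 F y = 0 :=
    fun y hy => pd2_zero_on_open (isOpen_Vout R) hsupp hy 0
  have hInt : Integrable (fun τ => |pd2 0 F ![τ, b]|) :=
    integrable_slice0 hcontD.abs (fun y hy => by rw [hsD y hy]; exact abs_zero) b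
  have hzero : F ![-M, b] = 0 := by
    apply hsupp
    show R ^ 2 < ((-M : ℝ)) ^ 2 + b ^ 2
    have : (![-M, b] 0) = -M := rfl
    nlinarith [sq_nonneg b]
  rcases le_or_gt (-M) a with hMa | hMa
  · have hFTC : ∫ τ in (-M)..a, pd2 0 F ![τ, b] = F ![a, b] - F ![-M, b] :=
      intervalIntegral.integral_eq_sub_of_hasDerivAt
        (fun τ _ => hasDerivAt_slice0 (hdF _))
        ((hcontD.comp (continuous_mk0 b)).intervalIntegrable _ _)
    calc |F ![a, b]| = |∫ τ in (-M)..a, pd2 0 F ![τ, b]| := by rw [hFTC, hzero, sub_zero]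
      _ ≤ ∫ τ in (-M)..a, |pd2 0 F ![τ, b]| :=
          intervalIntegral.abs_integral_le_integral_abs hMa
      _ = ∫ τ in Set.Ioc (-M) a, |pd2 0 F ![τ, b]| := intervalIntegral.integral_of_le hMa
      _ ≤ ∫ τ, |pd2 0 F ![τ, b]| :=
          setIntegral_le_integral hInt (Filter.Eventually.of_forall fun τ => abs_nonneg _)
  · have hz2 : F ![a, b] = 0 := by
      apply hsupp
      show R ^ 2 < a ^ 2 + b ^ 2
      nlinarith [sq_nonneg b]
    rw [hz2, abs_zero]
    exact integral_nonneg fun τ => abs_nonneg _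

lemma line1 {F : (Fin 2 → ℝ) → ℝ} {R : ℝ} (hF : ContDiff ℝ ∞ F) (hR : 0 ≤ R)
    (hsupp : ∀ y ∈ Vout R, F y = 0) (a b : ℝ) :
    |F ![a, b]| ≤ ∫ σ, |pd2 1 F ![a, σ]| := by
  set M := R + 1 with hMdef
  have hdF : ∀ y, DifferentiableAt ℝ F y :=
    fun y => (hF.differentiable (by norm_num)).differentiableAt
  have hcontD : Continuous (pd2 1 F) := (contDiff_pd2 hF 1).continuous
  have hsD : ∀ y ∈ Vout R, pd2 1 F y = 0 :=
    fun y hy => pd2_zero_on_open (isOpen_Vout R) hsupp hy 1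
  have hInt : Integrable (fun σ => |pd2 1 F ![a, σ]|) :=
    integrable_slice1 hcontD.abs (fun y hy => by rw [hsD y hy]; exact abs_zero) a
  have hzero : F ![a, -M] = 0 := by
    apply hsupp
    show R ^ 2 < a ^ 2 + ((-M : ℝ)) ^ 2
    nlinarith [sq_nonneg a]
  rcases le_or_gt (-M) b with hMb | hMb
  · have hFTC : ∫ σ in (-M)..b, pd2 1 F ![a, σ] = F ![a, b] - F ![a, -M] :=
      intervalIntegral.integral_eq_sub_of_hasDerivAt
        (fun σ _ => hasDerivAt_slice1 (hdF _))
        ((hcontD.comp (continuous_mk1 a)).intervalIntegrable _ _)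
    calc |F ![a, b]| = |∫ σ in (-M)..b, pd2 1 F ![a, σ]| := by rw [hFTC, hzero, sub_zero]
      _ ≤ ∫ σ in (-M)..b, |pd2 1 F ![a, σ]| :=
          intervalIntegral.abs_integral_le_integral_abs hMb
      _ = ∫ σ in Set.Ioc (-M) b, |pd2 1 F ![a, σ]| := intervalIntegral.integral_of_le hMb
      _ ≤ ∫ σ, |pd2 1 F ![a, σ]| :=
          setIntegral_le_integral hInt (Filter.Eventually.of_forall fun σ => abs_nonneg _)
  · have hz2 : F ![a, b] = 0 := by
      apply hsupp
      show R ^ 2 < a ^ 2 + b ^ 2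
      nlinarith [sq_nonneg a]
    rw [hz2, abs_zero]
    exact integral_nonneg fun σ => abs_nonneg _

/-! chunk 5b : 1D Cauchy-Schwarz -/

lemma sq_int_le {g : ℝ → ℝ} {M : ℝ} (hM : 1 ≤ M) (hcont : Continuous g)
    (hsupp : ∀ τ, M ^ 2 < τ ^ 2 → g τ = 0) :
    (∫ τ, |g τ|) ^ 2 ≤ (2 * M) * ∫ τ, (g τ) ^ 2 := by
  have hM0 : (0:ℝ) < M := lt_of_lt_of_le one_pos hM
  have hcs : HasCompactSupport g :=
    HasCompactSupport.intro (isCompact_Icc (a := -M) (b := M))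
      (fun τ hτ => hsupp τ (sq_lt_of_outside hM0.le hτ))
  have hint : Integrable g := hcont.integrable_of_hasCompactSupport hcs
  have hint_abs : Integrable (fun τ => |g τ|) := hint.abs
  have hint_sq : Integrable (fun τ => (g τ) ^ 2) := by
    apply (hcont.pow 2).integrable_of_hasCompactSupport
    apply HasCompactSupport.intro (isCompact_Icc (a := -M) (b := M))
    intro τ hτ
    rw [Pi.pow_apply, hsupp τ (sq_lt_of_outside hM0.le hτ)]
    norm_num
  set I := ∫ τ, |g τ| with hIdef
  set J := ∫ τ, (g τ) ^ 2 with hJdef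
  have hI : 0 ≤ I := integral_nonneg fun τ => abs_nonneg _
  have hJ : 0 ≤ J := integral_nonneg fun τ => sq_nonneg _
  have hint_ind : ∀ c : ℝ, Integrable ((Set.Icc (-M) M).indicator (fun _ => c)) := by
    intro c
    rw [integrable_indicator_iff measurableSet_Icc]
    refine integrableOn_const ?_
    simp
  have hind_int : ∀ c : ℝ, ∫ τ, (Set.Icc (-M) M).indicator (fun _ => c) τ = (2 * M) * c := by
    intro c
    rw [integral_indicator_const c measurableSet_Icc, Real.volume_real_Icc]
    rw [max_eq_left (by linarith : (0:ℝ) ≤ M - -M)]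
    rw [smul_eq_mul]
    ring
  have key : ∀ c : ℝ, 0 < c → I ≤ ((2 * M) * c + J / c) / 2 := by
    intro c hc
    have hpt : ∀ τ, |g τ| ≤ ((Set.Icc (-M) M).indicator (fun _ => c) τ + (g τ) ^ 2 / c) / 2 := by
      intro τ
      by_cases hτ : τ ∈ Set.Icc (-M) M
      · rw [Set.indicator_of_mem hτ]
        have h2 : 2 * c * |g τ| ≤ c ^ 2 + (g τ) ^ 2 := by
          nlinarith [sq_nonneg (|g τ| - c), sq_abs (g τ)]
        rw [le_div_iff₀ (by norm_num : (0:ℝ) < 2), ← sub_nonneg]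
        have hexp : c + (g τ) ^ 2 / c - |g τ| * 2
            = (c ^ 2 + (g τ) ^ 2 - 2 * c * |g τ|) / c := by
          field_simp
        rw [hexp]
        apply div_nonneg _ hc.le
        linarith
      · rw [Set.indicator_of_notMem hτ]
        rw [hsupp τ (sq_lt_of_outside hM0.le hτ)]
        simp
    calc I ≤ ∫ τ, ((Set.Icc (-M) M).indicator (fun _ => c) τ + (g τ) ^ 2 / c) / 2 := by
          apply integral_mono hint_abs _ hpt
          exact (((hint_ind c).add (hint_sq.div_const c)).div_const 2)
      _ = ((2 * M) * c + J / c) / 2 := by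
          rw [integral_div, integral_add (hint_ind c) (hint_sq.div_const c), integral_div,
            hind_int c]
  rcases eq_or_lt_of_le hJ with hJ0 | hJ0
  · have hIc : ∀ c : ℝ, 0 < c → I ≤ M * c := by
      intro c hc
      have := key c hc
      rw [← hJ0] at this
      simp at this
      linarith
    have hI0 : I = 0 := by
      by_contra h
      have hIpos : 0 < I := lt_of_le_of_ne hI (Ne.symm h)
      have h5 := hIc (I / (2 * M)) (by positivity)
      have h6 : M * (I / (2 * M)) = I / 2 := by field_simp
      rw [h6] at h5
      linarith
    rw [hI0, ← hJ0]
    norm_num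
  · set c := Real.sqrt (J / (2 * M)) with hcdef
    have hc : 0 < c := Real.sqrt_pos.mpr (by positivity)
    have hc2 : c ^ 2 = J / (2 * M) := Real.sq_sqrt (by positivity)
    have hkey := key c hc
    have h1 : I * c ≤ J := by
      have hc2' : 2 * M * c ^ 2 = J := by
        rw [hc2]
        field_simp
      have hexp : ((2 * M * c + J / c) / 2) * c = (2 * M * c ^ 2 + J) / 2 := by
        field_simp
      have hmul := mul_le_mul_of_nonneg_right hkey hc.le
      rw [hexp] at hmul
      linarith
    have h3 : I ^ 2 * (J / (2 * M)) ≤ J ^ 2 := by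
      have := mul_self_le_mul_self (by positivity : 0 ≤ I * c) h1
      nlinarith [hc2]
    have h4 : I ^ 2 * J ≤ J ^ 2 * (2 * M) := by
      have h2M : (0:ℝ) < 2 * M := by linarith
      calc I ^ 2 * J = (I ^ 2 * (J / (2 * M))) * (2 * M) := by field_simp
        _ ≤ J ^ 2 * (2 * M) := by nlinarith
    nlinarith [hJ0]

/-! chunk 6 : sup bound -/

lemma abs_mul_add_mul_le (u v w z : ℝ) :
    |u * v + w * z| ≤ (u ^ 2 + v ^ 2 + w ^ 2 + z ^ 2) / 2 := by
  have h := abs_add_le (u * v) (w * z)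
  have h1 : |u * v| ≤ (u ^ 2 + v ^ 2) / 2 := by
    rw [abs_mul]
    nlinarith [sq_nonneg (|u| - |v|), sq_abs u, sq_abs v, abs_nonneg u, abs_nonneg v]
  have h2 : |w * z| ≤ (w ^ 2 + z ^ 2) / 2 := by
    rw [abs_mul]
    nlinarith [sq_nonneg (|w| - |z|), sq_abs w, sq_abs z, abs_nonneg w, abs_nonneg z]
  linarith

lemma integrable_indicator_Icc (M c : ℝ) :
    Integrable ((Set.Icc (-M) M).indicator (fun _ => c)) := by
  rw [integrable_indicator_iff measurableSet_Icc]
  refine integrableOn_const ?_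
  simp

lemma integral_indicator_Icc {M : ℝ} (hM : 0 ≤ M) (c : ℝ) :
    ∫ τ, (Set.Icc (-M) M).indicator (fun _ => c) τ = (2 * M) * c := by
  rw [integral_indicator_const c measurableSet_Icc, Real.volume_real_Icc]
  rw [max_eq_left (by linarith : (0:ℝ) ≤ M - -M)]
  rw [smul_eq_mul]
  ring

lemma sup_sq_le {F : (Fin 2 → ℝ) → ℝ} {R : ℝ} (hF : ContDiff ℝ ∞ F) (hR : 0 ≤ R)
    (hsupp : ∀ y ∈ Vout R, F y = 0) (x : Fin 2 → ℝ) :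
    (F x) ^ 2 ≤ (4 * (R + 1) ^ 2 + 1) *
      (Nsq (pd2 0 F) + Nsq (pd2 1 F) + Nsq (pd2 1 (pd2 0 F))) := by
  set M := R + 1 with hMdef
  have hM1 : 1 ≤ M := by simp [hMdef]; linarith
  have hM0 : 0 ≤ M := by linarith
  set F0 := pd2 0 F with hF0def
  set F1 := pd2 1 F with hF1def
  set F01 := pd2 1 (pd2 0 F) with hF01def
  have hF0s : ContDiff ℝ ∞ F0 := contDiff_pd2 hF 0
  have hF1s : ContDiff ℝ ∞ F1 := contDiff_pd2 hF 1
  have hF01s : ContDiff ℝ ∞ F01 := contDiff_pd2 hF0s 1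
  have hdF : ∀ y, DifferentiableAt ℝ F y :=
    fun y => (hF.differentiable (by norm_num)).differentiableAt
  have hdF0 : ∀ y, DifferentiableAt ℝ F0 y :=
    fun y => (hF0s.differentiable (by norm_num)).differentiableAt
  have hsF0 : ∀ y ∈ Vout R, F0 y = 0 :=
    fun y hy => pd2_zero_on_open (isOpen_Vout R) hsupp hy 0
  have hsF1 : ∀ y ∈ Vout R, F1 y = 0 :=
    fun y hy => pd2_zero_on_open (isOpen_Vout R) hsupp hy 1
  have hsF01 : ∀ y ∈ Vout R, F01 y = 0 :=
    fun y hy => pd2_zero_on_open (isOpen_Vout R) hsF0 hy 1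
  -- squares integrable
  have hiFsq : Integrable (fun y => F y ^ 2) :=
    integrable_of_Vout (hF.continuous.pow 2) (fun y hy => by rw [hsupp y hy]; norm_num)
  have hiF0sq : Integrable (fun y => F0 y ^ 2) :=
    integrable_of_Vout (hF0s.continuous.pow 2) (fun y hy => by rw [hsF0 y hy]; norm_num)
  have hiF1sq : Integrable (fun y => F1 y ^ 2) :=
    integrable_of_Vout (hF1s.continuous.pow 2) (fun y hy => by rw [hsF1 y hy]; norm_num)
  have hiF01sq : Integrable (fun y => F01 y ^ 2) :=
    integrable_of_Vout (hF01s.continuous.pow 2) (fun y hy => by rw [hsF01 y hy]; norm_num)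
  -- the function G = F * F0 and W
  set G := fun y => F y * F0 y with hGdef
  have hGs : ContDiff ℝ ∞ G := hF.mul hF0s
  have hsG : ∀ y ∈ Vout R, G y = 0 := fun y hy => by
    show F y * F0 y = 0
    rw [hsupp y hy, zero_mul]
  set W := fun y => F1 y ^ 2 + F0 y ^ 2 + F y ^ 2 + F01 y ^ 2 with hWdef
  have hWcont : Continuous W :=
    (((hF1s.continuous.pow 2).add (hF0s.continuous.pow 2)).add
      (hF.continuous.pow 2)).add (hF01s.continuous.pow 2)
  have hsW : ∀ y ∈ Vout R, W y = 0 := fun y hy => by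
    show F1 y ^ 2 + F0 y ^ 2 + F y ^ 2 + F01 y ^ 2 = 0
    rw [hsupp y hy, hsF0 y hy, hsF1 y hy, hsF01 y hy]
    norm_num
  have hWint : Integrable W := integrable_of_Vout hWcont hsW
  -- step 1
  have step1 : ∀ a b : ℝ, (F ![a, b]) ^ 2 ≤ ∫ τ, 2 * |G ![τ, b]| := by
    intro a b
    have hFsqs : ContDiff ℝ ∞ (fun y => F y * F y) := hF.mul hF
    have hsFsq : ∀ y ∈ Vout R, F y * F y = 0 := fun y hy => by rw [hsupp y hy, zero_mul]
    have h := line0 hFsqs hR hsFsq a b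
    have hI : (fun τ => |pd2 0 (fun y => F y * F y) ![τ, b]|)
        = fun τ => 2 * |G ![τ, b]| := by
      funext τ
      rw [pd2_mul (hdF _) (hdF _)]
      have he : pd2 0 F ![τ, b] * F ![τ, b] + F ![τ, b] * pd2 0 F ![τ, b]
          = 2 * (F ![τ, b] * F0 ![τ, b]) := by rw [← hF0def]; ring
      rw [he, abs_mul]
      norm_num
      simp only [hGdef, abs_mul]
    rw [hI] at h
    have hL : |F ![a, b] * F ![a, b]| = (F ![a, b]) ^ 2 := by
      rw [abs_mul_self]
      ring
    rw [hL] at h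
    exact h
  -- step 2 and 3
  have step2 : ∀ τ b : ℝ, |G ![τ, b]| ≤ ∫ σ, |pd2 1 G ![τ, σ]| :=
    fun τ b => line1 hGs hR hsG τ b
  have step3 : ∀ y, |pd2 1 G y| ≤ W y / 2 := by
    intro y
    rw [show pd2 1 G y = pd2 1 F y * F0 y + F y * pd2 1 F0 y from pd2_mul (hdF y) (hdF0 y) 1]
    exact abs_mul_add_mul_le _ _ _ _
  -- step 4
  have step4 : ∀ b : ℝ, (∫ τ, 2 * |G ![τ, b]|) ≤ Nsq F1 + Nsq F0 + Nsq F + Nsq F01 := by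
    intro b
    have hGcont : Continuous (pd2 1 G) := (contDiff_pd2 hGs 1).continuous
    have hsabs : ∀ y ∈ Vout R, |pd2 1 G y| = 0 := fun y hy => by
      rw [pd2_zero_on_open (isOpen_Vout R) hsG hy 1, abs_zero]
    have hmono : ∀ τ, 2 * |G ![τ, b]| ≤ ∫ σ, W ![τ, σ] := by
      intro τ
      have h2 := step2 τ b
      have h3 : (∫ σ, |pd2 1 G ![τ, σ]|) ≤ ∫ σ, W ![τ, σ] / 2 := by
        apply integral_mono (integrable_slice1 hGcont.abs hsabs τ)
          ((integrable_slice1 hWcont hsW τ).div_const 2)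
        exact fun σ => step3 _
      have h4 : ∫ σ, W ![τ, σ] / 2 = (∫ σ, W ![τ, σ]) / 2 := integral_div 2 _
      have h5 : 0 ≤ |G ![τ, b]| := abs_nonneg _
      linarith
    have hint1 : Integrable (fun τ => 2 * |G ![τ, b]|) := by
      have : Integrable (fun τ => |G ![τ, b]|) :=
        integrable_slice0 hGs.continuous.abs (fun y hy => by rw [hsG y hy, abs_zero]) b
      exact this.const_mul 2
    have hint2 : Integrable (fun τ => ∫ σ, W ![τ, σ]) := integrable_slice_fun hWint
    have h := integral_mono hint1 hint2 hmono
    rw [← iterated_integral hWint] at h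
    have hsplit : ∫ y, W y = Nsq F1 + Nsq F0 + Nsq F + Nsq F01 := by
      show ∫ y, (F1 y ^ 2 + F0 y ^ 2 + F y ^ 2 + F01 y ^ 2) = _
      rw [integral_add (f := fun y => F1 y ^ 2 + F0 y ^ 2 + F y ^ 2)
        (g := fun y => F01 y ^ 2) ((hiF1sq.add hiF0sq).add hiFsq) hiF01sq]
      rw [integral_add (f := fun y => F1 y ^ 2 + F0 y ^ 2) (g := fun y => F y ^ 2)
        (hiF1sq.add hiF0sq) hiFsq]
      rw [integral_add (f := fun y => F1 y ^ 2) (g := fun y => F0 y ^ 2) hiF1sq hiF0sq]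
      rfl
    rw [hsplit] at h
    exact h
  -- step 5 : Poincaré
  set S0 : ℝ → ℝ := fun b => ∫ τ, (F0 ![τ, b]) ^ 2 with hS0def
  have hS0nonneg : ∀ b, 0 ≤ S0 b := fun b => integral_nonneg fun τ => sq_nonneg _
  have h5a : ∀ a b : ℝ, (F ![a, b]) ^ 2 ≤ 2 * M * S0 b := by
    intro a b
    have hline := line0 hF hR hsupp a b
    have hCS := sq_int_le (g := fun τ => F0 ![τ, b]) hM1
      (hF0s.continuous.comp (continuous_mk0 b))
      (fun τ hτ => by
        apply hsF0
        show R ^ 2 < (![τ, b] 0) ^ 2 + (![τ, b] 1) ^ 2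
        have h0 : (![τ, b] 0) = τ := rfl
        have h1 : (![τ, b] 1) = b := rfl
        rw [h0, h1]
        nlinarith [sq_nonneg b])
    calc (F ![a, b]) ^ 2 = |F ![a, b]| ^ 2 := (sq_abs _).symm
      _ ≤ (∫ τ, |F0 ![τ, b]|) ^ 2 := by
          apply pow_le_pow_left₀ (abs_nonneg _) hline
      _ ≤ 2 * M * S0 b := by
          have : (2 * M) * (∫ τ, (F0 ![τ, b]) ^ 2) = 2 * M * S0 b := rfl
          linarith [hCS]
  have h5b : ∀ b : ℝ, (∫ a, (F ![a, b]) ^ 2) ≤ 2 * M * (2 * M * S0 b) := by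
    intro b
    have hptb : ∀ a, (F ![a, b]) ^ 2
        ≤ (Set.Icc (-M) M).indicator (fun _ => 2 * M * S0 b) a := by
      intro a
      by_cases ha : a ∈ Set.Icc (-M) M
      · rw [Set.indicator_of_mem ha]
        exact h5a a b
      · rw [Set.indicator_of_notMem ha]
        have hFz : F ![a, b] = 0 := by
          apply hsupp
          show R ^ 2 < (![a, b] 0) ^ 2 + (![a, b] 1) ^ 2
          have h0 : (![a, b] 0) = a := rfl
          have h1 : (![a, b] 1) = b := rfl
          rw [h0, h1]
          have := sq_lt_of_outside hM0 ha
          nlinarith [sq_nonneg b]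
        rw [hFz]
        norm_num
    have hint1 : Integrable (fun a => (F ![a, b]) ^ 2) :=
      integrable_slice0 (g := fun y => F y ^ 2) (hF.continuous.pow 2)
        (fun y hy => by show F y ^ 2 = 0; rw [hsupp y hy]; norm_num) b
    have h := integral_mono hint1 (integrable_indicator_Icc M _) hptb
    rw [integral_indicator_Icc hM0 _] at h
    linarith
  have hNF : Nsq F = ∫ b, ∫ a, (F ![a, b]) ^ 2 :=
    iterated_integral' (g := fun y => F y ^ 2) hiFsq
  have hint3 : Integrable (fun b => ∫ a, (F ![a, b]) ^ 2) :=
    integrable_slice_fun' (g := fun y => F y ^ 2) hiFsq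
  have hint4 : Integrable (fun b => 2 * M * (2 * M * S0 b)) := by
    have h0 : Integrable S0 := integrable_slice_fun' (g := fun y => F0 y ^ 2) hiF0sq
    exact (h0.const_mul (2 * M)).const_mul (2 * M)
  have h5c := integral_mono hint3 hint4 h5b
  rw [← hNF] at h5c
  have hRHS : ∫ b, 2 * M * (2 * M * S0 b) = 4 * M ^ 2 * Nsq F0 := by
    rw [integral_const_mul, integral_const_mul]
    have hS0int : ∫ b, S0 b = Nsq F0 :=
      (iterated_integral' (g := fun y => F0 y ^ 2) hiF0sq).symm
    rw [hS0int]
    ring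
  rw [hRHS] at h5c
  -- combine everything
  have hx : x = ![x 0, x 1] := by
    funext i
    fin_cases i <;> rfl
  have hmain : (F x) ^ 2 ≤ Nsq F1 + Nsq F0 + Nsq F + Nsq F01 := by
    rw [hx]
    exact le_trans (step1 (x 0) (x 1)) (step4 (x 1))
  have hN0 := Nsq_nonneg F0
  have hN1 := Nsq_nonneg F1
  have hN01 := Nsq_nonneg F01
  have hNF0 := Nsq_nonneg F
  have hM2 : 0 ≤ M ^ 2 := sq_nonneg M
  have hgoal : (F x) ^ 2 ≤ (4 * M ^ 2 + 1) * (Nsq F0 + Nsq F1 + Nsq F01) := by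
    nlinarith [mul_nonneg hM2 hN1, mul_nonneg hM2 hN01, mul_nonneg hM2 hN0]
  rw [hMdef] at hgoal
  exact hgoal

/-! chunk 7a : smoothness of hyp, support transfer -/

lemma contDiff_coord2 (i : Fin 2) : ContDiff ℝ ∞ (fun x : Fin 2 → ℝ => x i) :=
  (ContinuousLinearMap.proj i : (Fin 2 → ℝ) →L[ℝ] ℝ).contDiff

lemma contDiff_tfun {s : ℝ} (hs : 0 < s) : ContDiff ℝ ∞ (tfun s) := by
  have hQ : ContDiff ℝ ∞ (fun x : Fin 2 → ℝ => s ^ 2 + (x 0) ^ 2 + (x 1) ^ 2) :=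
    (contDiff_const.add ((contDiff_coord2 0).pow 2)).add ((contDiff_coord2 1).pow 2)
  rw [contDiff_iff_contDiffAt]
  intro x
  exact (Real.contDiffAt_sqrt (Qpos hs x).ne').comp x hQ.contDiffAt

lemma contDiff_hyp {s : ℝ} (hs : 0 < s) : ContDiff ℝ ∞ (hyp s) := by
  apply contDiff_pi.mpr
  intro i
  fin_cases i
  · exact contDiff_tfun hs
  · exact contDiff_coord2 0
  · exact contDiff_coord2 1

lemma contDiff_comp_hyp {s : ℝ} (hs : 0 < s) {v : (Fin 3 → ℝ) → ℝ} (hv : ContDiff ℝ ∞ v) :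
    ContDiff ℝ ∞ (fun x => v (hyp s x)) :=
  hv.comp (contDiff_hyp hs)

lemma hyp_mem_Uout {s : ℝ} (hs1 : 1 < s) {x : Fin 2 → ℝ}
    (hx : ((s ^ 2 - 1) / 2) ^ 2 < (x 0) ^ 2 + (x 1) ^ 2) : hyp s x ∈ Uout := by
  have hs0 : 0 < s := lt_trans one_pos hs1
  show hyp s x 0 - 1 < rad (hyp s x)
  have hrad : rad (hyp s x) = Real.sqrt ((x 0) ^ 2 + (x 1) ^ 2) := rfl
  have hρ0 : 0 ≤ Real.sqrt ((x 0) ^ 2 + (x 1) ^ 2) := Real.sqrt_nonneg _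
  have hρsq : (Real.sqrt ((x 0) ^ 2 + (x 1) ^ 2)) ^ 2 = (x 0) ^ 2 + (x 1) ^ 2 :=
    Real.sq_sqrt (by positivity)
  have hc0 : 0 ≤ (s ^ 2 - 1) / 2 := by nlinarith
  have hρgt : (s ^ 2 - 1) / 2 < Real.sqrt ((x 0) ^ 2 + (x 1) ^ 2) := by
    nlinarith [hρ0, hρsq, hx, hc0]
  have ht : hyp s x 0 = tfun s x := rfl
  have htsq := tfun_sq hs0 x
  have ht0 := (tfun_pos hs0 x).le
  rw [ht, hrad]
  nlinarith [hρgt, htsq, ht0, hρsq]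

lemma upd_zero_on_Uout {w : (Fin 3 → ℝ) → ℝ} (hz : ∀ q ∈ Uout, w q = 0) (a : Fin 3) :
    ∀ q ∈ Uout, upd a w q = 0 := by
  intro q hq
  unfold upd
  rw [pd_zero_on_Uout hz hq 0, pd_zero_on_Uout hz hq a]
  simp

lemma comp_hyp_supp {w : (Fin 3 → ℝ) → ℝ} {s : ℝ} (hs1 : 1 < s)
    (hz : ∀ q ∈ Uout, w q = 0) :
    ∀ y ∈ Vout ((s ^ 2 - 1) / 2), w (hyp s y) = 0 :=
  fun y hy => hz _ (hyp_mem_Uout hs1 hy)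


/-! chunk 7b : energy component bounds -/

lemma cont_upd_comp {s : ℝ} (hs : 0 < s) {w : (Fin 3 → ℝ) → ℝ} (hw : ContDiff ℝ ∞ w)
    (k : Fin 2) : Continuous (fun x => upd k.succ w (hyp s x)) := by
  have he : (fun x => upd k.succ w (hyp s x)) = pd2 k (fun x => w (hyp s x)) :=
    funext fun x =>
      (pd_comp_hyp hs x (hw.differentiable (by norm_num)).differentiableAt k).symm
  rw [he]
  exact (contDiff_pd2 (contDiff_comp_hyp hs hw) k).continuous

lemma E0_expand (s : ℝ) (w : (Fin 3 → ℝ) → ℝ) :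
    E0 s w = ∫ x, ((upd 1 w (hyp s x)) ^ 2 + (upd 2 w (hyp s x)) ^ 2
      + ((s / tfun s x) * pd 0 w (hyp s x)) ^ 2) := rfl

lemma E0_parts {s : ℝ} (hs1 : 1 < s) {w : (Fin 3 → ℝ) → ℝ} (hw : ContDiff ℝ ∞ w)
    (hz : ∀ q ∈ Uout, w q = 0) :
    (∫ x, (upd 1 w (hyp s x)) ^ 2) ≤ E0 s w
    ∧ (∫ x, (upd 2 w (hyp s x)) ^ 2) ≤ E0 s w
    ∧ 0 ≤ E0 s w := by
  have hs0 : 0 < s := by linarith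
  set R := (s ^ 2 - 1) / 2 with hRdef
  have hsupp1 : ∀ y ∈ Vout R, upd 1 w (hyp s y) = 0 :=
    fun y hy => upd_zero_on_Uout hz 1 _ (hyp_mem_Uout hs1 hy)
  have hsupp2 : ∀ y ∈ Vout R, upd 2 w (hyp s y) = 0 :=
    fun y hy => upd_zero_on_Uout hz 2 _ (hyp_mem_Uout hs1 hy)
  have hsupp3 : ∀ y ∈ Vout R, pd 0 w (hyp s y) = 0 :=
    fun y hy => pd_zero_on_Uout hz (hyp_mem_Uout hs1 hy) 0
  have hc1 : Continuous (fun x => upd 1 w (hyp s x)) := cont_upd_comp hs0 hw 0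
  have hc2 : Continuous (fun x => upd 2 w (hyp s x)) := cont_upd_comp hs0 hw 1
  have hc3 : Continuous (fun x => (s / tfun s x) * pd 0 w (hyp s x)) := by
    apply Continuous.mul
    · exact continuous_const.div (contDiff_tfun hs0).continuous fun x => (tfun_pos hs0 x).ne'
    · exact (contDiff_pd hw 0).continuous.comp (contDiff_hyp hs0).continuous
  have hi1 : Integrable (fun x => (upd 1 w (hyp s x)) ^ 2) :=
    integrable_of_Vout (hc1.pow 2) (fun y hy => by
      show (upd 1 w (hyp s y)) ^ 2 = 0
      rw [hsupp1 y hy]; norm_num)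
  have hi2 : Integrable (fun x => (upd 2 w (hyp s x)) ^ 2) :=
    integrable_of_Vout (hc2.pow 2) (fun y hy => by
      show (upd 2 w (hyp s y)) ^ 2 = 0
      rw [hsupp2 y hy]; norm_num)
  have hi3 : Integrable (fun x => ((s / tfun s x) * pd 0 w (hyp s x)) ^ 2) :=
    integrable_of_Vout (hc3.pow 2) (fun y hy => by
      show ((s / tfun s y) * pd 0 w (hyp s y)) ^ 2 = 0
      rw [hsupp3 y hy]; norm_num)
  have hsplit : E0 s w = (∫ x, (upd 1 w (hyp s x)) ^ 2) + (∫ x, (upd 2 w (hyp s x)) ^ 2)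
      + ∫ x, ((s / tfun s x) * pd 0 w (hyp s x)) ^ 2 := by
    rw [E0_expand]
    rw [integral_add (f := fun x => (upd 1 w (hyp s x)) ^ 2 + (upd 2 w (hyp s x)) ^ 2)
      (g := fun x => ((s / tfun s x) * pd 0 w (hyp s x)) ^ 2) (hi1.add hi2) hi3]
    rw [integral_add (f := fun x => (upd 1 w (hyp s x)) ^ 2)
      (g := fun x => (upd 2 w (hyp s x)) ^ 2) hi1 hi2]
  have hn1 : 0 ≤ ∫ x, (upd 1 w (hyp s x)) ^ 2 := integral_nonneg fun x => sq_nonneg _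
  have hn2 : 0 ≤ ∫ x, (upd 2 w (hyp s x)) ^ 2 := integral_nonneg fun x => sq_nonneg _
  have hn3 : 0 ≤ ∫ x, ((s / tfun s x) * pd 0 w (hyp s x)) ^ 2 :=
    integral_nonneg fun x => sq_nonneg _
  refine ⟨by linarith [hsplit], by linarith [hsplit], by linarith [hsplit]⟩

lemma E0_nonneg (s : ℝ) (w : (Fin 3 → ℝ) → ℝ) : 0 ≤ E0 s w := by
  rw [E0_expand]
  exact integral_nonneg fun x => by positivity

/-! chunk 7c : Nsq bounds and the master sup estimate -/

set_option maxHeartbeats 1000000 in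
lemma Nsq_bounds {φ : (Fin 3 → ℝ) → ℝ} (hφ : ContDiff ℝ ∞ φ)
    (hsupp : ∀ p, ¬ inK p → φ p = 0) {s : ℝ} (hs1 : 1 < s) (I : List (Fin 5)) :
    Nsq (pd2 0 (fun x => Zcomp I φ (hyp s x))) ≤ E0 s (Zcomp I φ)
    ∧ Nsq (pd2 1 (fun x => Zcomp I φ (hyp s x))) ≤ E0 s (Zcomp I φ)
    ∧ Nsq (pd2 1 (pd2 0 (fun x => Zcomp I φ (hyp s x))))
        ≤ 2 * E0 s (Zcomp I φ) + 2 * E0 s (Zcomp (3 :: I) φ) := by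
  have hs0 : 0 < s := by linarith
  set v := Zcomp I φ with hvdef
  set g := Zcomp (3 :: I) φ with hgdef
  have hgZ : g = Zop 3 v := rfl
  have hv : ContDiff ℝ ∞ v := contDiff_Zcomp hφ I
  have hg : ContDiff ℝ ∞ g := contDiff_Zcomp hφ (3 :: I)
  have hvz : ∀ q ∈ Uout, v q = 0 := Zcomp_zero_on_Uout hsupp I
  have hgz : ∀ q ∈ Uout, g q = 0 := Zcomp_zero_on_Uout hsupp (3 :: I)
  have hvd : ∀ q, DifferentiableAt ℝ v q :=
    fun q => (hv.differentiable (by norm_num)).differentiableAt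
  have hgd : ∀ q, DifferentiableAt ℝ g q :=
    fun q => (hg.differentiable (by norm_num)).differentiableAt
  set F := fun x => v (hyp s x) with hFdef
  have hEv := E0_parts hs1 hv hvz
  have hEg := E0_parts hs1 hg hgz
  -- first derivatives
  have hF0 : pd2 0 F = fun x => upd 1 v (hyp s x) :=
    funext fun x => pd_comp_hyp hs0 x (hvd _) 0
  have hF1 : pd2 1 F = fun x => upd 2 v (hyp s x) :=
    funext fun x => pd_comp_hyp hs0 x (hvd _) 1
  have hb0 : Nsq (pd2 0 F) ≤ E0 s v := by
    rw [hF0]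
    exact hEv.1
  have hb1 : Nsq (pd2 1 F) ≤ E0 s v := by
    rw [hF1]
    exact hEv.2.1
  refine ⟨hb0, hb1, ?_⟩
  -- second mixed derivative
  have hF0' : pd2 0 F = fun x => (tfun s x)⁻¹ * g (hyp s x) := by
    rw [hF0]
    funext x
    rw [upd_one_eq (tfun_pos hs0 x).ne' v]
    rfl
  have htinv : ∀ x : Fin 2 → ℝ, HasFDerivAt (fun y => (tfun s y)⁻¹)
      ((-(tfun s x ^ 2)⁻¹) • Dt s x) x := by
    intro x
    exact (hasDerivAt_inv (tfun_pos hs0 x).ne').comp_hasFDerivAt x (hasFDerivAt_tfun hs0 x)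
  have hG2d : ∀ x : Fin 2 → ℝ, DifferentiableAt ℝ (fun y => g (hyp s y)) x :=
    fun x => ((contDiff_comp_hyp hs0 hg).differentiable (by norm_num)).differentiableAt
  have hF01 : ∀ x : Fin 2 → ℝ, pd2 1 (pd2 0 F) x
      = (-(tfun s x ^ 2)⁻¹ * (x 1 / tfun s x)) * g (hyp s x)
        + (tfun s x)⁻¹ * upd 2 g (hyp s x) := by
    intro x
    rw [hF0']
    rw [pd2_mul (htinv x).differentiableAt (hG2d x) 1]
    congr 1
    · congr 1
      show fderiv ℝ (fun y => (tfun s y)⁻¹) x (Pi.single 1 1) = _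
      rw [(htinv x).fderiv]
      simp only [ContinuousLinearMap.smul_apply, smul_eq_mul]
      rw [Dt_apply hs0 x 1]
    · congr 1
      exact pd_comp_hyp hs0 x (hgd _) 1
  -- pointwise bound
  have hpt : ∀ x : Fin 2 → ℝ, (pd2 1 (pd2 0 F) x) ^ 2
      ≤ 2 * (upd 1 v (hyp s x)) ^ 2 + 2 * (upd 2 g (hyp s x)) ^ 2 := by
    intro x
    have ht1 : 1 < tfun s x := lt_of_lt_of_le hs1 (tfun_ge_s hs0 x)
    have ht0 : 0 < tfun s x := lt_trans one_pos ht1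
    have hx1 : |x 1| ≤ tfun s x := abs_coord_le_tfun hs0 x 1
    have hA1 : upd 1 v (hyp s x) = (tfun s x)⁻¹ * g (hyp s x) := by
      rw [upd_one_eq (ht0.ne') v]
      rfl
    rw [hF01 x]
    -- first term = -(x 1 / tfun s x) * (tfun s x)⁻¹ * (upd 1 v (hyp s x))
    have he : (-(tfun s x ^ 2)⁻¹ * (x 1 / tfun s x)) * g (hyp s x)
        = (-(x 1 / tfun s x) * (tfun s x)⁻¹) * ((tfun s x)⁻¹ * g (hyp s x)) := by
      rw [div_eq_mul_inv]
      ring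
    rw [he, ← hA1]
    have hco : |(-(x 1 / tfun s x) * (tfun s x)⁻¹)| ≤ 1 := by
      rw [abs_mul, abs_neg, abs_div, abs_inv]
      rw [abs_of_pos ht0]
      have h1 : |x 1| / tfun s x ≤ 1 := (div_le_one ht0).mpr hx1
      have h2 : (tfun s x)⁻¹ ≤ 1 := by
        rw [inv_le_one_iff₀]
        right
        linarith
      have h3 : 0 ≤ |x 1| / tfun s x := by positivity
      nlinarith
    have hco2 : |(tfun s x)⁻¹| ≤ 1 := by
      rw [abs_inv, abs_of_pos ht0, inv_le_one_iff₀]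
      right
      linarith
    set c1 := -(x 1 / tfun s x) * (tfun s x)⁻¹
    set A := upd 1 v (hyp s x)
    set B := upd 2 g (hyp s x)
    have h1 : |c1 * A| ≤ |A| := by
      rw [abs_mul]
      nlinarith [abs_nonneg A, abs_nonneg c1, hco]
    have h2 : |(tfun s x)⁻¹ * B| ≤ |B| := by
      rw [abs_mul]
      nlinarith [abs_nonneg B, abs_nonneg ((tfun s x)⁻¹), hco2]
    have h3 : |c1 * A + (tfun s x)⁻¹ * B| ≤ |A| + |B| :=
      le_trans (abs_add_le _ _) (by linarith)
    calc (c1 * A + (tfun s x)⁻¹ * B) ^ 2 = |c1 * A + (tfun s x)⁻¹ * B| ^ 2 :=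
          (sq_abs _).symm
      _ ≤ (|A| + |B|) ^ 2 := by nlinarith [abs_nonneg (c1 * A + (tfun s x)⁻¹ * B)]
      _ ≤ 2 * A ^ 2 + 2 * B ^ 2 := by nlinarith [sq_nonneg (|A| - |B|), sq_abs A, sq_abs B]
  -- integrate
  have hsupp01 : ∀ y ∈ Vout ((s ^ 2 - 1) / 2), pd2 1 (pd2 0 F) y = 0 := by
    intro y hy
    have hFz : ∀ z ∈ Vout ((s ^ 2 - 1) / 2), F z = 0 :=
      fun z hz => comp_hyp_supp hs1 hvz z hz
    have h0z : ∀ z ∈ Vout ((s ^ 2 - 1) / 2), pd2 0 F z = 0 :=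
      fun z hz => pd2_zero_on_open (isOpen_Vout _) hFz hz 0
    exact pd2_zero_on_open (isOpen_Vout _) h0z hy 1
  have hcont01 : Continuous (pd2 1 (pd2 0 F)) :=
    (contDiff_pd2 (contDiff_pd2 (contDiff_comp_hyp hs0 hv) 0) 1).continuous
  have hi01 : Integrable (fun x => (pd2 1 (pd2 0 F) x) ^ 2) :=
    integrable_of_Vout (hcont01.pow 2) (fun y hy => by
      show (pd2 1 (pd2 0 F) y) ^ 2 = 0
      rw [hsupp01 y hy]; norm_num)
  have hcA : Continuous (fun x => upd 1 v (hyp s x)) := cont_upd_comp hs0 hv 0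
  have hcB : Continuous (fun x => upd 2 g (hyp s x)) := cont_upd_comp hs0 hg 1
  have hsA : ∀ y ∈ Vout ((s ^ 2 - 1) / 2), upd 1 v (hyp s y) = 0 :=
    fun y hy => upd_zero_on_Uout hvz 1 _ (hyp_mem_Uout hs1 hy)
  have hsB : ∀ y ∈ Vout ((s ^ 2 - 1) / 2), upd 2 g (hyp s y) = 0 :=
    fun y hy => upd_zero_on_Uout hgz 2 _ (hyp_mem_Uout hs1 hy)
  have hiA : Integrable (fun x => (upd 1 v (hyp s x)) ^ 2) :=
    integrable_of_Vout (hcA.pow 2) (fun y hy => by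
      show (upd 1 v (hyp s y)) ^ 2 = 0
      rw [hsA y hy]; norm_num)
  have hiB : Integrable (fun x => (upd 2 g (hyp s x)) ^ 2) :=
    integrable_of_Vout (hcB.pow 2) (fun y hy => by
      show (upd 2 g (hyp s y)) ^ 2 = 0
      rw [hsB y hy]; norm_num)
  have hiSum : Integrable (fun x => 2 * upd 1 v (hyp s x) ^ 2 + 2 * upd 2 g (hyp s x) ^ 2) :=
    (hiA.const_mul 2).add (hiB.const_mul 2)
  have hmono := integral_mono hi01 hiSum hpt
  have hsum : ∫ x, (2 * (upd 1 v (hyp s x)) ^ 2 + 2 * (upd 2 g (hyp s x)) ^ 2)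
      = 2 * (∫ x, (upd 1 v (hyp s x)) ^ 2) + 2 * ∫ x, (upd 2 g (hyp s x)) ^ 2 := by
    rw [integral_add (hiA.const_mul 2) (hiB.const_mul 2), integral_const_mul,
      integral_const_mul]
  rw [hsum] at hmono
  have hfin1 : (∫ x, (upd 1 v (hyp s x)) ^ 2) ≤ E0 s v := hEv.1
  have hfin2 : (∫ x, (upd 2 g (hyp s x)) ^ 2) ≤ E0 s g := hEg.2.1
  show Nsq (pd2 1 (pd2 0 F)) ≤ 2 * E0 s v + 2 * E0 s g
  have hN : Nsq (pd2 1 (pd2 0 F)) = ∫ x, (pd2 1 (pd2 0 F) x) ^ 2 := rfl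
  rw [hN]
  linarith

/-! chunk 7d : master estimate -/

lemma F_le_singleSum {F : List (Fin 5) → ℝ} (hF : ∀ I, 0 ≤ F I) {m : ℕ}
    (I : List (Fin 5)) (hI : I.length ≤ m) : F I ≤ singleSum m F := by
  unfold singleSum
  have step1 : F I ≤ ∑ f : Fin I.length → Fin 5, F (List.ofFn f) := by
    have h : F I = F (List.ofFn I.get) := by rw [List.ofFn_get]
    rw [h]
    exact Finset.single_le_sum (fun f _ => hF _) (Finset.mem_univ _)
  refine le_trans step1 ?_
  exact Finset.single_le_sum (f := fun j => ∑ f : Fin j → Fin 5, F (List.ofFn f))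
    (fun j _ => Finset.sum_nonneg fun f _ => hF _) (Finset.mem_range.mpr (by omega))

lemma master {φ : (Fin 3 → ℝ) → ℝ} (hφ : ContDiff ℝ ∞ φ)
    (hsupp : ∀ p, ¬ inK p → φ p = 0) {m : ℕ} {s s₀ s₁ C₁ ε : ℝ}
    (hs₀ : 1 < s₀) (hss : s ∈ Set.Icc s₀ s₁)
    (hCε : 0 < C₁ * ε) (hE : Real.sqrt (Em m s φ) ≤ C₁ * ε)
    (I : List (Fin 5)) (hlen : I.length + 1 ≤ m)
    {p : Fin 3 → ℝ} (hp : onH s p) :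
    |Zcomp I φ p| ≤ Real.sqrt (6 * (4 * ((s₁ ^ 2 - 1) / 2 + 1) ^ 2 + 1)) * (C₁ * ε) := by
  obtain ⟨hs₀s, hss₁⟩ := hss
  have hs1 : 1 < s := lt_of_lt_of_le hs₀ hs₀s
  have hs0 : 0 < s := by linarith
  set R := (s₁ ^ 2 - 1) / 2 with hRdef
  have hs₁1 : 1 < s₁ := lt_of_lt_of_le hs1 hss₁
  have hR0 : 0 ≤ R := by rw [hRdef]; nlinarith
  have hEmnn : 0 ≤ Em m s φ := by
    unfold Em singleSum
    apply Finset.sum_nonneg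
    intro j _
    apply Finset.sum_nonneg
    intro f _
    exact E0_nonneg _ _
  have hEmle : Em m s φ ≤ (C₁ * ε) ^ 2 := by
    have h1 : Em m s φ = (Real.sqrt (Em m s φ)) ^ 2 := (Real.sq_sqrt hEmnn).symm
    rw [h1]
    exact pow_le_pow_left₀ (Real.sqrt_nonneg _) hE 2
  have hE0le : ∀ J : List (Fin 5), J.length ≤ m → E0 s (Zcomp J φ) ≤ (C₁ * ε) ^ 2 :=
    fun J hJ => le_trans
      (F_le_singleSum (F := fun K => E0 s (Zcomp K φ)) (fun K => E0_nonneg s _) J hJ) hEmle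
  set v := Zcomp I φ with hvdef
  set F := fun x => v (hyp s x) with hFdef
  have hFsm : ContDiff ℝ ∞ F := contDiff_comp_hyp hs0 (contDiff_Zcomp hφ I)
  have hvz : ∀ q ∈ Uout, v q = 0 := Zcomp_zero_on_Uout hsupp I
  have hFsupp : ∀ y ∈ Vout R, F y = 0 := by
    intro y hy
    have hy' : R ^ 2 < (y 0) ^ 2 + (y 1) ^ 2 := hy
    have hcs : 0 ≤ (s ^ 2 - 1) / 2 := by nlinarith
    have hcR : (s ^ 2 - 1) / 2 ≤ R := by rw [hRdef]; nlinarith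
    have h1 : ((s ^ 2 - 1) / 2) ^ 2 < (y 0) ^ 2 + (y 1) ^ 2 := by nlinarith
    exact hvz _ (hyp_mem_Uout hs1 h1)
  have hsup := sup_sq_le hFsm hR0 hFsupp ![p 1, p 2]
  have hNb := Nsq_bounds hφ hsupp hs1 I
  have hB0 : Nsq (pd2 0 F) ≤ (C₁ * ε) ^ 2 := le_trans hNb.1 (hE0le I (by omega))
  have hB1 : Nsq (pd2 1 F) ≤ (C₁ * ε) ^ 2 := le_trans hNb.2.1 (hE0le I (by omega))
  have hB01 : Nsq (pd2 1 (pd2 0 F)) ≤ 4 * (C₁ * ε) ^ 2 := by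
    have h1 := hE0le I (by omega)
    have h2 := hE0le (3 :: I) (by simp; omega)
    have h3 := hNb.2.2
    linarith
  have hpeq : hyp s ![p 1, p 2] = p := by
    funext i
    fin_cases i
    · show tfun s ![p 1, p 2] = p 0
      unfold tfun
      have h0 : (![p 1, p 2] : Fin 2 → ℝ) 0 = p 1 := rfl
      have h1 : (![p 1, p 2] : Fin 2 → ℝ) 1 = p 2 := rfl
      rw [h0, h1]
      have h2 : s ^ 2 + (p 1) ^ 2 + (p 2) ^ 2 = (p 0) ^ 2 := by
        have := hp.1
        linarith
      rw [h2, Real.sqrt_sq hp.2.le]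
    · rfl
    · rfl
  have hFp : F ![p 1, p 2] = v p := by rw [hFdef]; simp only; rw [hpeq]
  have hvp : |v p| ^ 2 ≤ (6 * (4 * (R + 1) ^ 2 + 1)) * (C₁ * ε) ^ 2 := by
    rw [sq_abs, ← hFp]
    have hfac : (0:ℝ) ≤ 4 * (R + 1) ^ 2 + 1 := by positivity
    have hmul := mul_le_mul_of_nonneg_left
      (add_le_add (add_le_add hB0 hB1) hB01) hfac
    nlinarith [hsup, hmul]
  have hrhs0 : 0 ≤ Real.sqrt (6 * (4 * (R + 1) ^ 2 + 1)) * (C₁ * ε) :=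
    mul_nonneg (Real.sqrt_nonneg _) hCε.le
  have hsq : (Real.sqrt (6 * (4 * (R + 1) ^ 2 + 1)) * (C₁ * ε)) ^ 2
      = (6 * (4 * (R + 1) ^ 2 + 1)) * (C₁ * ε) ^ 2 := by
    rw [mul_pow, Real.sq_sqrt (by positivity)]
  rw [← hsq] at hvp
  have h2 : |v p| = Real.sqrt (|v p| ^ 2) := (Real.sqrt_sq (abs_nonneg _)).symm
  rw [h2]
  calc Real.sqrt (|v p| ^ 2)
      ≤ Real.sqrt ((Real.sqrt (6 * (4 * (R + 1) ^ 2 + 1)) * (C₁ * ε)) ^ 2) :=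
        Real.sqrt_le_sqrt hvp
    _ = Real.sqrt (6 * (4 * (R + 1) ^ 2 + 1)) * (C₁ * ε) := Real.sqrt_sq hrhs0

/-! chunk 8 : pointwise algebra for the frame derivatives -/

lemma upd_apply_ne {w : (Fin 3 → ℝ) → ℝ} {p : Fin 3 → ℝ} {a : Fin 3} (ha : a ≠ 0) :
    upd a w p = (p a / p 0) * pd 0 w p + pd a w p := by
  simp [upd, ha]

lemma upd_zero_apply (w : (Fin 3 → ℝ) → ℝ) (p : Fin 3 → ℝ) : upd 0 w p = pd 0 w p := by
  simp [upd]

lemma upd_zero_fun (w : (Fin 3 → ℝ) → ℝ) : upd 0 w = Zop 0 w :=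
  funext fun q => by simp [upd, Zop]

lemma Zop_zero_apply (w : (Fin 3 → ℝ) → ℝ) (p : Fin 3 → ℝ) : Zop 0 w p = pd 0 w p := by
  simp [Zop]

lemma pd_upd_eq {v : (Fin 3 → ℝ) → ℝ} (hv : ContDiff ℝ ∞ v) {p : Fin 3 → ℝ}
    (hp : 0 < p 0) {a : Fin 3} {z : Fin 5}
    (haz : ∀ (q : Fin 3 → ℝ), q 0 ≠ 0 → upd a v q = (q 0)⁻¹ * Zop z v q) (μ : Fin 3) :
    pd μ (upd a v) p = -((if (0:Fin 3) = μ then 1 else 0) * (p 0 ^ 2)⁻¹) * Zop z v p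
      + (p 0)⁻¹ * pd μ (Zop z v) p := by
  have hev : upd a v =ᶠ[nhds p] fun q => (q 0)⁻¹ * Zop z v q := by
    have hopen : IsOpen {q : Fin 3 → ℝ | 0 < q 0} :=
      isOpen_lt continuous_const (continuous_apply 0)
    filter_upwards [hopen.mem_nhds hp] with q hq
    exact haz q (ne_of_gt hq)
  have h1 : pd μ (upd a v) p = pd μ (fun q => (q 0)⁻¹ * Zop z v q) p := by
    show fderiv ℝ (upd a v) p _ = fderiv ℝ _ p _
    rw [hev.fderiv_eq]
  rw [h1]
  exact pd_inv_mul hp.ne' ((contDiff_Zop hv z).differentiable (by norm_num)).differentiableAt μ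

lemma abs_combo_le {s c1 c2 X W Bd : ℝ} (hs : 0 < s) (hc1 : |c1| ≤ 1) (hc2 : |c2| ≤ 1)
    (hX : |X| ≤ Bd) (hW : |W| ≤ Bd) : |s * (c1 * X + c2 * W)| ≤ s * (2 * Bd) := by
  rw [abs_mul, abs_of_pos hs]
  have h1 : |c1 * X + c2 * W| ≤ |c1| * |X| + |c2| * |W| := by
    refine le_trans (abs_add_le _ _) ?_
    rw [abs_mul, abs_mul]
  have hB0 : 0 ≤ Bd := le_trans (abs_nonneg X) hX
  have h2 : |c1| * |X| ≤ Bd := by nlinarith [abs_nonneg c1, abs_nonneg X]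
  have h3 : |c2| * |W| ≤ Bd := by nlinarith [abs_nonneg c2, abs_nonneg W]
  have h4 : |c1 * X + c2 * W| ≤ 2 * Bd := by linarith
  nlinarith [abs_nonneg (c1 * X + c2 * W)]

lemma inv_le_one_of_one_lt {t : ℝ} (ht : 1 < t) : t⁻¹ ≤ 1 := by
  rw [inv_le_one_iff₀]
  right
  linarith

lemma boundC_zero1 {v : (Fin 3 → ℝ) → ℝ} {p : Fin 3 → ℝ} (hp0 : 1 < p 0)
    {a : Fin 3} {za : Fin 5}
    (hza : ∀ w (q : Fin 3 → ℝ), q 0 ≠ 0 → upd a w q = (q 0)⁻¹ * Zop za w q)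
    {s Bd : ℝ} (hs : 0 < s) (hB0 : 0 ≤ Bd)
    (hZ : |Zop za (Zop 0 v) p| ≤ Bd) :
    |p 0 * s * upd a (upd 0 v) p| ≤ s * (2 * Bd) := by
  have hp0ne : p 0 ≠ 0 := by positivity
  have heq : p 0 * s * upd a (upd 0 v) p = s * Zop za (Zop 0 v) p := by
    rw [upd_zero_fun, hza (Zop 0 v) p hp0ne]
    field_simp
  rw [heq, abs_mul, abs_of_pos hs]
  nlinarith [abs_nonneg (Zop za (Zop 0 v) p)]

lemma boundC_zero2 {v : (Fin 3 → ℝ) → ℝ} (hv : ContDiff ℝ ∞ v) {p : Fin 3 → ℝ}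
    (hp0 : 1 < p 0) {a : Fin 3} {za : Fin 5}
    (hza : ∀ w (q : Fin 3 → ℝ), q 0 ≠ 0 → upd a w q = (q 0)⁻¹ * Zop za w q)
    {s Bd : ℝ} (hs : 0 < s)
    (hX : |Zop za v p| ≤ Bd) (hY : |Zop 0 (Zop za v) p| ≤ Bd) :
    |p 0 * s * upd 0 (upd a v) p| ≤ s * (2 * Bd) := by
  have hp0pos : 0 < p 0 := by linarith
  have hp0ne : p 0 ≠ 0 := ne_of_gt hp0pos
  have hpd := pd_upd_eq hv hp0pos (hza v) 0
  rw [if_pos rfl] at hpd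
  have heq : p 0 * s * upd 0 (upd a v) p
      = s * ((-(p 0)⁻¹) * Zop za v p + 1 * Zop 0 (Zop za v) p) := by
    rw [upd_zero_apply, hpd, Zop_zero_apply]
    field_simp
  rw [heq]
  apply abs_combo_le hs _ (by norm_num) hX hY
  rw [abs_neg, abs_inv, abs_of_pos hp0pos]
  exact inv_le_one_of_one_lt hp0

lemma boundC_main {v : (Fin 3 → ℝ) → ℝ} (hv : ContDiff ℝ ∞ v) {p : Fin 3 → ℝ}
    (hp0 : 1 < p 0) {a b : Fin 3} {za zb : Fin 5}
    (hpa : |p a| ≤ p 0) (ha : a ≠ 0)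
    (hza : ∀ w (q : Fin 3 → ℝ), q 0 ≠ 0 → upd a w q = (q 0)⁻¹ * Zop za w q)
    (hzb : ∀ w (q : Fin 3 → ℝ), q 0 ≠ 0 → upd b w q = (q 0)⁻¹ * Zop zb w q)
    {s Bd : ℝ} (hs : 0 < s)
    (hX : |Zop zb v p| ≤ Bd) (hW : |Zop za (Zop zb v) p| ≤ Bd) :
    |p 0 * s * upd a (upd b v) p| ≤ s * (2 * Bd) := by
  have hp0pos : 0 < p 0 := by linarith
  have hp0ne : p 0 ≠ 0 := ne_of_gt hp0pos
  set X := Zop zb v p with hXdef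
  set Y0 := pd 0 (Zop zb v) p with hY0def
  set Ya := pd a (Zop zb v) p with hYadef
  set W := Zop za (Zop zb v) p with hWdef
  have hpd0 : pd 0 (upd b v) p = -(p 0 ^ 2)⁻¹ * X + (p 0)⁻¹ * Y0 := by
    have h := pd_upd_eq hv hp0pos (hzb v) 0
    rw [if_pos rfl] at h
    rw [h]
    ring
  have hpda : pd a (upd b v) p = (p 0)⁻¹ * Ya := by
    have h := pd_upd_eq hv hp0pos (hzb v) a
    rw [if_neg (Ne.symm ha)] at h
    rw [h]
    ring
  have hcomb : p a * Y0 + p 0 * Ya = W := by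
    have h := hza (Zop zb v) p hp0ne
    rw [upd_apply_ne ha] at h
    rw [← hY0def, ← hYadef, ← hWdef] at h
    field_simp at h
    linarith
  have heq : p 0 * s * upd a (upd b v) p
      = s * ((-(p a) * ((p 0) ^ 2)⁻¹) * X + (p 0)⁻¹ * W) := by
    rw [upd_apply_ne ha, hpd0, hpda, ← hcomb]
    field_simp
    ring
  rw [heq]
  apply abs_combo_le hs _ _ hX hW
  · rw [abs_mul, abs_neg, abs_inv]
    have h1 : |p a| ≤ (p 0) ^ 2 := by nlinarith
    have h2 : |(p 0) ^ 2| = (p 0) ^ 2 := abs_of_pos (by positivity)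
    rw [h2]
    have h3 : (0:ℝ) < ((p 0) ^ 2)⁻¹ := by positivity
    calc |p a| * ((p 0) ^ 2)⁻¹ ≤ (p 0) ^ 2 * ((p 0) ^ 2)⁻¹ :=
          mul_le_mul_of_nonneg_right h1 h3.le
      _ = 1 := mul_inv_cancel₀ (by positivity)
  · rw [abs_inv, abs_of_pos hp0pos]
    exact inv_le_one_of_one_lt hp0


/-- `L^∞` bounds under the a priori energy assumption. -/
theorem Linfty_under_apriori (m : ℕ) (hm : 6 ≤ m) (s₀ s₁ : ℝ)
    (hs₀ : 1 < s₀) (hs₀₁ : s₀ ≤ s₁) (C₁ : ℝ) (hC₁ : 0 < C₁) :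
    ∃ C₂ > (0 : ℝ), ∀ ε : ℝ, 0 < ε → ∀ φ : (Fin 3 → ℝ) → ℝ, ContDiff ℝ ∞ φ →
      (∀ p, ¬ inK p → φ p = 0) →
      (∀ s ∈ Set.Icc s₀ s₁, Real.sqrt (Em m s φ) ≤ C₁ * ε) →
      ∀ s ∈ Set.Icc s₀ s₁, ∀ p : Fin 3 → ℝ, onH s p → inK p →
        (∀ J : List (Fin 5), J.length + 2 ≤ m → ∀ α : Fin 3,
            |s * pd α (Zcomp J φ) p| ≤ C₂ * ε)
        ∧ (∀ J : List (Fin 5), J.length + 2 ≤ m → ∀ a : Fin 3, (a = 1 ∨ a = 2) →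
            |p 0 * upd a (Zcomp J φ) p| ≤ C₂ * ε)
        ∧ (∀ J : List (Fin 5), J.length + 3 ≤ m → ∀ (a α : Fin 3), (a = 1 ∨ a = 2) →
            |p 0 * s * upd a (upd α (Zcomp J φ)) p|
              + |p 0 * s * upd α (upd a (Zcomp J φ)) p| ≤ C₂ * ε) := by
  have hs₁1 : 1 < s₁ := lt_of_lt_of_le hs₀ hs₀₁
  set D := Real.sqrt (6 * (4 * ((s₁ ^ 2 - 1) / 2 + 1) ^ 2 + 1)) * C₁ with hDdef
  have hD0 : 0 ≤ D := mul_nonneg (Real.sqrt_nonneg _) hC₁.le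
  refine ⟨8 * (s₁ + 1) * (D + 1), by positivity, ?_⟩
  intro ε hε φ hφ hsupp hE s hs p hponH hpinK
  have hCε : 0 < C₁ * ε := mul_pos hC₁ hε
  have hkey : ∀ I : List (Fin 5), I.length + 1 ≤ m → |Zcomp I φ p| ≤ D * ε := by
    intro I hI
    have h := master hφ hsupp hs₀ hs hCε (hE s hs) I hI hponH
    calc |Zcomp I φ p|
        ≤ Real.sqrt (6 * (4 * ((s₁ ^ 2 - 1) / 2 + 1) ^ 2 + 1)) * (C₁ * ε) := h
      _ = D * ε := by rw [hDdef]; ring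
  obtain ⟨hs₀s, hss₁⟩ := hs
  have hs1 : 1 < s := lt_of_lt_of_le hs₀ hs₀s
  have hsp : 0 < s := by linarith
  have hrad0 : 0 ≤ rad p := Real.sqrt_nonneg _
  have hp0 : 1 < p 0 := by
    have h := hpinK
    unfold inK at h
    linarith
  have hp0pos : 0 < p 0 := by linarith
  have hp0ne : p 0 ≠ 0 := ne_of_gt hp0pos
  have hpa : ∀ a : Fin 3, (a = 1 ∨ a = 2) → |p a| ≤ p 0 := by
    intro a ha
    have h1 : |p a| ≤ rad p := by
      rw [← Real.sqrt_sq_eq_abs]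
      apply Real.sqrt_le_sqrt
      rcases ha with h | h <;> subst h <;> nlinarith [sq_nonneg (p 1), sq_nonneg (p 2)]
    have h2 := hpinK
    unfold inK at h2
    linarith
  have hDε0 : 0 ≤ D * ε := mul_nonneg hD0 hε.le
  have hεD : D * ε ≤ 8 * (s₁ + 1) * (D + 1) * ε := by nlinarith
  have hza_of : ∀ a : Fin 3, (a = 1 ∨ a = 2) →
      ∃ z : Fin 5, ∀ w (q : Fin 3 → ℝ), q 0 ≠ 0 → upd a w q = (q 0)⁻¹ * Zop z w q := by
    intro a ha
    rcases ha with h | h <;> subst h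
    · exact ⟨3, fun w q hq => upd_one_eq hq w⟩
    · exact ⟨4, fun w q hq => upd_two_eq hq w⟩
  refine ⟨?_, ?_, ?_⟩
  -- (A)
  · intro J hJ α
    have hzα : ∃ z : Fin 5, ∀ w (q : Fin 3 → ℝ), Zop z w q = pd α w q := by
      fin_cases α
      · exact ⟨0, fun w q => by simp [Zop]⟩
      · exact ⟨1, fun w q => by simp [Zop]⟩
      · exact ⟨2, fun w q => by simp [Zop]⟩
    obtain ⟨z, hz⟩ := hzα
    have heq : pd α (Zcomp J φ) p = Zcomp (z :: J) φ p := (hz _ p).symm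
    rw [abs_mul, heq, abs_of_pos hsp]
    have h := hkey (z :: J) (by simp; omega)
    calc s * |Zcomp (z :: J) φ p| ≤ s₁ * (D * ε) :=
          mul_le_mul hss₁ h (abs_nonneg _) (by linarith)
      _ ≤ 8 * (s₁ + 1) * (D + 1) * ε := by nlinarith
  -- (B)
  · intro J hJ a ha
    obtain ⟨za, hza⟩ := hza_of a ha
    have heq : p 0 * upd a (Zcomp J φ) p = Zcomp (za :: J) φ p := by
      rw [hza _ p hp0ne]
      field_simp
      rfl
    rw [heq]
    exact le_trans (hkey (za :: J) (by simp; omega)) hεD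
  -- (C)
  · intro J hJ a α ha
    set v := Zcomp J φ with hvdef
    have hv : ContDiff ℝ ∞ v := contDiff_Zcomp hφ J
    obtain ⟨za, hza⟩ := hza_of a ha
    have hane : a ≠ 0 := by rcases ha with h | h <;> subst h <;> decide
    have hpa' : |p a| ≤ p 0 := hpa a ha
    -- generic Zcomp value bounds
    have hk1 : ∀ z1 z2 : Fin 5, |Zop z1 (Zop z2 v) p| ≤ D * ε := by
      intro z1 z2
      have : Zop z1 (Zop z2 v) p = Zcomp (z1 :: z2 :: J) φ p := rfl
      rw [this]
      exact hkey _ (by simp; omega)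
    have hk0 : ∀ z1 : Fin 5, |Zop z1 v p| ≤ D * ε := by
      intro z1
      have : Zop z1 v p = Zcomp (z1 :: J) φ p := rfl
      rw [this]
      exact hkey _ (by simp; omega)
    have hT : |p 0 * s * upd a (upd α v) p| + |p 0 * s * upd α (upd a v) p|
        ≤ 2 * (s * (2 * (D * ε))) := by
      by_cases hα0 : α = 0
      · subst hα0
        have hT1 := boundC_zero1 (v := v) hp0 hza hsp hDε0 (hk1 za 0)
        have hT2 := boundC_zero2 hv hp0 hza hsp (hk0 za) (hk1 0 za)
        linarith
      · have hα : α = 1 ∨ α = 2 := by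
          fin_cases α
          · exact absurd rfl hα0
          · exact Or.inl rfl
          · exact Or.inr rfl
        obtain ⟨zα, hzα⟩ := hza_of α hα
        have hαne : α ≠ 0 := hα0
        have hpα' : |p α| ≤ p 0 := hpa α hα
        have hT1 := boundC_main hv hp0 hpa' hane hza hzα hsp (hk0 zα) (hk1 za zα)
        have hT2 := boundC_main hv hp0 hpα' hαne hzα hza hsp (hk0 za) (hk1 zα za)
        linarith
    calc |p 0 * s * upd a (upd α v) p| + |p 0 * s * upd α (upd a v) p|
        ≤ 2 * (s * (2 * (D * ε))) := hT
      _ ≤ 8 * (s₁ + 1) * (D + 1) * ε := by nlinarith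
end
end

section
/- (Integral bound for the quadratic null form.) There exists a constant C>0 such that for all s>1, all A>0, and all smooth functions φ, v on ℝ^{1+2} vanishing outside the cone K, if at every point of H_s ∩ K one has |s ∂_αφ| ≤ A for all α ∈ {0,1,2} and |t ∂̲_aφ| ≤ A for a ∈ {1,2}, then | ∫_{H_s} ( m^{μν}m^{αβ} − m^{μα}m^{νβ} ) ∂_μφ ∂_νφ ∂_αv ∂_βv dx | ≤ C A² s^{−2} E_0(s,v), where ∫_{H_s} u dx = ∫_{ℝ²} u(√(s²+|x|²),x) dx and Einstein summation over μ,ν,α,β ∈ {0,1,2} is used. -/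
open scoped BigOperators ContDiff
open MeasureTheory Set

noncomputable section

set_option maxHeartbeats 1000000

private lemma habs3 {P Q : ℝ} (c u w : ℝ) (hc : |c| ≤ 1) (hu : |u| ≤ P) (hw : |w| ≤ Q) :
    |c*(u*w)| ≤ P*Q := by
  calc |c*(u*w)| = |c| * (|u| * |w|) := by rw [abs_mul, abs_mul]
    _ ≤ 1*(P*Q) := by
        have h0 : (0:ℝ) ≤ P := le_trans (abs_nonneg u) hu
        have h1 : (0:ℝ) ≤ Q := le_trans (abs_nonneg w) hw
        gcongr
    _ = P*Q := one_mul _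

private lemma sum7_abs {T1 T2 T3 T4 T5 T6 T7 B : ℝ}
    (h1 : |T1| ≤ B) (h2 : |T2| ≤ B) (h3 : |T3| ≤ B) (h4 : |T4| ≤ B)
    (h5 : |T5| ≤ B) (h6 : |T6| ≤ B) (h7 : |T7| ≤ B) :
    |(-T1 + T2 + T3 - T4 - T5 - T6 - T7)| ≤ 7*B := by
  have l1 := abs_le.mp h1; have l2 := abs_le.mp h2; have l3 := abs_le.mp h3
  have l4 := abs_le.mp h4; have l5 := abs_le.mp h5; have l6 := abs_le.mp h6
  have l7 := abs_le.mp h7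
  rw [abs_le]
  constructor <;>
    linarith [l1.1, l2.1, l3.1, l4.1, l5.1, l6.1, l7.1,
      l1.2, l2.2, l3.2, l4.2, l5.2, l6.2, l7.2]

private lemma master_s11 (s t x1 x2 A f0 f1 f2 g0 g1 g2 : ℝ)
    (hs : 0 < s) (hst : s ≤ t)
    (hx : x1^2 + x2^2 + s^2 = t^2)
    (hf0 : |s*f0| ≤ A)
    (ha1 : |(t*(x1/t*f0+f1))| ≤ A) (ha2 : |(t*(x2/t*f0+f2))| ≤ A) :
    |(-(f0*f0)+f1*f1+f2*f2) * (-(g0*g0)+g1*g1+g2*g2)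
        - (-(f0*g0)+f1*g1+f2*g2)^2|
      ≤ 100*A^2/s^2 * ((x1/t*g0+g1)^2 + (x2/t*g0+g2)^2 + (s/t*g0)^2) := by
  have ht : 0 < t := lt_of_lt_of_le hs hst
  have ht0 : t ≠ 0 := ne_of_gt ht
  have hA0 : 0 ≤ A := le_trans (abs_nonneg _) hf0
  have he : (0:ℝ) ≤ (x1/t*g0+g1)^2 + (x2/t*g0+g2)^2 + (s/t*g0)^2 := by positivity
  set E := Real.sqrt ((x1/t*g0+g1)^2 + (x2/t*g0+g2)^2 + (s/t*g0)^2) with hEdef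
  have hE0 : 0 ≤ E := Real.sqrt_nonneg _
  have hE2 : E^2 = (x1/t*g0+g1)^2 + (x2/t*g0+g2)^2 + (s/t*g0)^2 := Real.sq_sqrt he
  have hb0E : |(s/t*g0)| ≤ E := by
    rw [hEdef, ← Real.sqrt_sq_eq_abs]
    apply Real.sqrt_le_sqrt; linarith [sq_nonneg (x1/t*g0+g1), sq_nonneg (x2/t*g0+g2)]
  have hb1E : |(x1/t*g0+g1)| ≤ E := by
    rw [hEdef, ← Real.sqrt_sq_eq_abs]
    apply Real.sqrt_le_sqrt; linarith [sq_nonneg (s/t*g0), sq_nonneg (x2/t*g0+g2)]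
  have hb2E : |(x2/t*g0+g2)| ≤ E := by
    rw [hEdef, ← Real.sqrt_sq_eq_abs]
    apply Real.sqrt_le_sqrt; linarith [sq_nonneg (s/t*g0), sq_nonneg (x1/t*g0+g1)]
  have hc1 : |(x1/t)| ≤ 1 := by
    rw [abs_div, abs_of_pos ht, div_le_one ht, ← Real.sqrt_sq_eq_abs, ← Real.sqrt_sq ht.le]
    apply Real.sqrt_le_sqrt; linarith [sq_nonneg x2, sq_nonneg s]
  have hc2 : |(x2/t)| ≤ 1 := by
    rw [abs_div, abs_of_pos ht, div_le_one ht, ← Real.sqrt_sq_eq_abs, ← Real.sqrt_sq ht.le]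
    apply Real.sqrt_le_sqrt; linarith [sq_nonneg x1, sq_nonneg s]
  have hsg : |(s/t)| ≤ 1 := by
    rw [abs_div, abs_of_pos ht, abs_of_pos hs, div_le_one ht]; exact hst
  have id1 : s*(-(f0*g0)+f1*g1+f2*g2) = -((s/t)*((s*f0)*(s/t*g0))) + (s/t)*((t*(x1/t*f0+f1))*(x1/t*g0+g1)) + (s/t)*((t*(x2/t*f0+f2))*(x2/t*g0+g2)) - (x1/t)*((t*(x1/t*f0+f1))*(s/t*g0)) - (x1/t)*((s*f0)*(x1/t*g0+g1)) - (x2/t)*((t*(x2/t*f0+f2))*(s/t*g0)) - (x2/t)*((s*f0)*(x2/t*g0+g2)) := by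
    field_simp
    linear_combination (f0*g0) * hx
  have id2 : s*t*(-(f0*f0)+f1*f1+f2*f2) = -((s/t)*((s*f0)*(s*f0))) + (s/t)*((t*(x1/t*f0+f1))*(t*(x1/t*f0+f1))) + (s/t)*((t*(x2/t*f0+f2))*(t*(x2/t*f0+f2))) - (x1/t)*((t*(x1/t*f0+f1))*(s*f0)) - (x1/t)*((s*f0)*(t*(x1/t*f0+f1))) - (x2/t)*((t*(x2/t*f0+f2))*(s*f0)) - (x2/t)*((s*f0)*(t*(x2/t*f0+f2))) := by
    field_simp
    linear_combination (f0^2) * hx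
  have id3 : s/t*(-(g0*g0)+g1*g1+g2*g2) = -((s/t)*((s/t*g0)*(s/t*g0))) + (s/t)*((x1/t*g0+g1)*(x1/t*g0+g1)) + (s/t)*((x2/t*g0+g2)*(x2/t*g0+g2)) - (x1/t)*((x1/t*g0+g1)*(s/t*g0)) - (x1/t)*((s/t*g0)*(x1/t*g0+g1)) - (x2/t)*((x2/t*g0+g2)*(s/t*g0)) - (x2/t)*((s/t*g0)*(x2/t*g0+g2)) := by
    field_simp
    linear_combination (g0^2) * hx
  have hQfg : |s*(-(f0*g0)+f1*g1+f2*g2)| ≤ 7*(A*E) := by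
    rw [id1]
    exact sum7_abs (habs3 _ _ _ hsg hf0 hb0E) (habs3 _ _ _ hsg ha1 hb1E)
      (habs3 _ _ _ hsg ha2 hb2E) (habs3 _ _ _ hc1 ha1 hb0E)
      (habs3 _ _ _ hc1 hf0 hb1E) (habs3 _ _ _ hc2 ha2 hb0E)
      (habs3 _ _ _ hc2 hf0 hb2E)
  have hQff : |s*t*(-(f0*f0)+f1*f1+f2*f2)| ≤ 7*(A*A) := by
    rw [id2]
    exact sum7_abs (habs3 _ _ _ hsg hf0 hf0) (habs3 _ _ _ hsg ha1 ha1)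
      (habs3 _ _ _ hsg ha2 ha2) (habs3 _ _ _ hc1 ha1 hf0)
      (habs3 _ _ _ hc1 hf0 ha1) (habs3 _ _ _ hc2 ha2 hf0)
      (habs3 _ _ _ hc2 hf0 ha2)
  have hQgg : |s/t*(-(g0*g0)+g1*g1+g2*g2)| ≤ 7*(E*E) := by
    rw [id3]
    exact sum7_abs (habs3 _ _ _ hsg hb0E hb0E) (habs3 _ _ _ hsg hb1E hb1E)
      (habs3 _ _ _ hsg hb2E hb2E) (habs3 _ _ _ hc1 hb1E hb0E)
      (habs3 _ _ _ hc1 hb0E hb1E) (habs3 _ _ _ hc2 hb2E hb0E)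
      (habs3 _ _ _ hc2 hb0E hb2E)
  have key : s^2 * ((-(f0*f0)+f1*f1+f2*f2) * (-(g0*g0)+g1*g1+g2*g2)
        - (-(f0*g0)+f1*g1+f2*g2)^2)
      = (s*t*(-(f0*f0)+f1*f1+f2*f2)) * (s/t*(-(g0*g0)+g1*g1+g2*g2))
        - (s*(-(f0*g0)+f1*g1+f2*g2))^2 := by
    field_simp
  have habs2 : s^2 * |(-(f0*f0)+f1*f1+f2*f2) * (-(g0*g0)+g1*g1+g2*g2)
        - (-(f0*g0)+f1*g1+f2*g2)^2| ≤ 98 * (A^2 * E^2) := by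
    rw [← abs_of_pos (show (0:ℝ) < s^2 by positivity), ← abs_mul, key]
    have h1 : |(s*t*(-(f0*f0)+f1*f1+f2*f2)) * (s/t*(-(g0*g0)+g1*g1+g2*g2))|
        ≤ 49 * (A^2 * E^2) := by
      rw [abs_mul]
      calc |s*t*(-(f0*f0)+f1*f1+f2*f2)| * |s/t*(-(g0*g0)+g1*g1+g2*g2)|
          ≤ (7*(A*A)) * (7*(E*E)) :=
            mul_le_mul hQff hQgg (abs_nonneg _) (by positivity)
        _ = 49 * (A^2 * E^2) := by ring
    have h2 : |(s*(-(f0*g0)+f1*g1+f2*g2))^2| ≤ 49 * (A^2 * E^2) := by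
      rw [abs_pow]
      calc |s*(-(f0*g0)+f1*g1+f2*g2)|^2 ≤ (7*(A*E))^2 :=
            pow_le_pow_left₀ (abs_nonneg _) hQfg 2
        _ = 49 * (A^2 * E^2) := by ring
    calc |(s*t*(-(f0*f0)+f1*f1+f2*f2)) * (s/t*(-(g0*g0)+g1*g1+g2*g2))
          - (s*(-(f0*g0)+f1*g1+f2*g2))^2|
        ≤ |(s*t*(-(f0*f0)+f1*f1+f2*f2)) * (s/t*(-(g0*g0)+g1*g1+g2*g2))|
          + |(s*(-(f0*g0)+f1*g1+f2*g2))^2| := abs_sub _ _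
      _ ≤ 49 * (A^2 * E^2) + 49 * (A^2 * E^2) := add_le_add h1 h2
      _ = 98 * (A^2 * E^2) := by ring
  rw [hE2] at habs2
  rw [div_mul_eq_mul_div, le_div_iff₀ (show (0:ℝ) < s^2 by positivity)]
  linarith [habs2, mul_nonneg (sq_nonneg A) he]

private lemma rad_cont : Continuous rad := by
  unfold rad
  fun_prop

private lemma fderiv_zero_of_notK {φ : (Fin 3 → ℝ) → ℝ} (hφ : ContDiff ℝ ∞ φ)
    (h0 : ∀ p, ¬ inK p → φ p = 0) : ∀ p, ¬ inK p → fderiv ℝ φ p = 0 := by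
  have hU : IsOpen {p : Fin 3 → ℝ | p 0 - 1 < rad p} :=
    isOpen_lt (by fun_prop) rad_cont
  have hcont : Continuous (fderiv ℝ φ) := hφ.continuous_fderiv (by norm_num)
  have hzeroU : ∀ p, p 0 - 1 < rad p → fderiv ℝ φ p = 0 := by
    intro p hp
    have hev : φ =ᶠ[nhds p] (fun _ => (0:ℝ)) := by
      filter_upwards [hU.mem_nhds hp] with q hq
      exact h0 q (by simp only [inK]; intro h; exact absurd h (not_lt.mpr hq.le))
    rw [hev.fderiv_eq, fderiv_const_apply]
  intro p hp
  rcases lt_or_eq_of_le (not_lt.mp hp) with h | h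
  · exact hzeroU p h
  · set q : ℕ → (Fin 3 → ℝ) := fun n => fun i => if i = 0 then p 0 - (1:ℝ)/(n+1) else p i
      with hq
    have hseq : Filter.Tendsto q Filter.atTop (nhds p) := by
      rw [tendsto_pi_nhds]
      intro i
      by_cases hi : i = 0
      · subst hi
        simp only [hq, if_pos rfl]
        have h1 : Filter.Tendsto (fun n : ℕ => p 0 - (1:ℝ)/(n+1)) Filter.atTop
            (nhds (p 0 - 0)) :=
          tendsto_const_nhds.sub tendsto_one_div_add_atTop_nhds_zero_nat
        simpa using h1
      · simp only [hq, if_neg hi]; exact tendsto_const_nhds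
    have hqz : ∀ n, fderiv ℝ φ (q n) = 0 := by
      intro n
      apply hzeroU
      have hr : rad (q n) = rad p := by simp [rad, hq]
      have h0' : q n 0 = p 0 - 1/(n+1) := by simp [hq]
      rw [hr, h0', ← h]
      have : (0:ℝ) < 1/(n+1) := by positivity
      linarith
    have hlim : Filter.Tendsto (fun n => fderiv ℝ φ (q n)) Filter.atTop
        (nhds (fderiv ℝ φ p)) := (hcont.continuousAt.tendsto).comp hseq
    have hlim0 : Filter.Tendsto (fun n => fderiv ℝ φ (q n)) Filter.atTop (nhds 0) := by
      simp only [hqz]; exact tendsto_const_nhds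
    exact tendsto_nhds_unique hlim hlim0

private lemma pd_cont (μ : Fin 3) {φ : (Fin 3 → ℝ) → ℝ} (hφ : ContDiff ℝ ∞ φ) :
    Continuous (pd μ φ) := by
  unfold pd
  exact (hφ.continuous_fderiv (by norm_num)).clm_apply continuous_const

private lemma hyp_cont (s : ℝ) : Continuous (hyp s) := by
  unfold hyp
  apply continuous_pi
  intro i
  fin_cases i
  · show Continuous fun x : Fin 2 → ℝ => Real.sqrt (s ^ 2 + (x 0) ^ 2 + (x 1) ^ 2)
    fun_prop
  · show Continuous fun x : Fin 2 → ℝ => x 0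
    fun_prop
  · show Continuous fun x : Fin 2 → ℝ => x 1
    fun_prop

private lemma eta_expand (φ v : (Fin 3 → ℝ) → ℝ) (p : Fin 3 → ℝ) :
    (∑ μ : Fin 3, ∑ ν : Fin 3, ∑ α : Fin 3, ∑ β : Fin 3,
      (eta μ ν * eta α β - eta μ α * eta ν β)
        * pd μ φ p * pd ν φ p * pd α v p * pd β v p)
    = (-(pd 0 φ p*pd 0 φ p)+pd 1 φ p*pd 1 φ p+pd 2 φ p*pd 2 φ p)
        * (-(pd 0 v p*pd 0 v p)+pd 1 v p*pd 1 v p+pd 2 v p*pd 2 v p)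
      - (-(pd 0 φ p*pd 0 v p)+pd 1 φ p*pd 1 v p+pd 2 φ p*pd 2 v p)^2 := by
  have e00 : eta 0 0 = -1 := by simp [eta]
  have e11 : eta 1 1 = 1 := by simp [eta]
  have e22 : eta 2 2 = 1 := by simp [eta]
  have e01 : eta 0 1 = 0 := by simp [eta]
  have e02 : eta 0 2 = 0 := by simp [eta]
  have e10 : eta 1 0 = 0 := by simp [eta]
  have e12 : eta 1 2 = 0 := by simp [eta]
  have e20 : eta 2 0 = 0 := by simp [eta]
  have e21 : eta 2 1 = 0 := by simp [eta]
  simp only [Fin.sum_univ_three, e00, e11, e22, e01, e02, e10, e12, e20, e21]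
  ring

private lemma notK_far {s : ℝ} (hs : 0 < s) (x : Fin 2 → ℝ)
    (hx : s^2 ≤ Real.sqrt ((x 0)^2 + (x 1)^2)) : ¬ inK (hyp s x) := by
  set r := Real.sqrt ((x 0)^2 + (x 1)^2) with hrdef
  intro hK
  have hr0 : 0 ≤ r := Real.sqrt_nonneg _
  have hr2 : r^2 = (x 0)^2 + (x 1)^2 := Real.sq_sqrt (by positivity)
  have hradeq : rad (hyp s x) = r := rfl
  have ht : hyp s x 0 ≤ r + 1 := by
    show Real.sqrt (s ^ 2 + (x 0) ^ 2 + (x 1) ^ 2) ≤ r + 1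
    rw [show (r+1) = Real.sqrt ((r+1)^2) from (Real.sqrt_sq (by positivity)).symm]
    apply Real.sqrt_le_sqrt
    nlinarith [hx, hr0, hr2]
  rw [inK, hradeq] at hK
  linarith

private lemma norm_le_r (x : Fin 2 → ℝ) : ‖x‖ ≤ Real.sqrt ((x 0)^2 + (x 1)^2) := by
  have hr0 : (0:ℝ) ≤ Real.sqrt ((x 0)^2 + (x 1)^2) := Real.sqrt_nonneg _
  apply (pi_norm_le_iff_of_nonneg hr0).mpr
  intro i
  rw [Real.norm_eq_abs, ← Real.sqrt_sq_eq_abs]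
  apply Real.sqrt_le_sqrt
  fin_cases i
  · simp; positivity
  · simp; positivity


/-- integral bound for the quadratic null form. -/
theorem quadratic_null_form_integral_bound :
    ∃ C > (0 : ℝ), ∀ s : ℝ, 1 < s → ∀ A : ℝ, 0 < A →
      ∀ φ v : (Fin 3 → ℝ) → ℝ, ContDiff ℝ ∞ φ → ContDiff ℝ ∞ v →
      (∀ p, ¬ inK p → φ p = 0) → (∀ p, ¬ inK p → v p = 0) →
      (∀ p : Fin 3 → ℝ, onH s p → inK p →
        (∀ α : Fin 3, |s * pd α φ p| ≤ A) ∧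
        (∀ a : Fin 3, (a = 1 ∨ a = 2) → |p 0 * upd a φ p| ≤ A)) →
      |∫ x : Fin 2 → ℝ, ∑ μ : Fin 3, ∑ ν : Fin 3, ∑ α : Fin 3, ∑ β : Fin 3,
          (eta μ ν * eta α β - eta μ α * eta ν β)
            * pd μ φ (hyp s x) * pd ν φ (hyp s x)
            * pd α v (hyp s x) * pd β v (hyp s x)| ≤
        C * A ^ 2 / s ^ 2 * E0 s v := by
  refine ⟨100, by norm_num, ?_⟩
  intro s hs A hA φ v hφ hv hφ0 hv0 hb
  have hs0 : (0:ℝ) < s := lt_trans one_pos hs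
  -- basic facts about points on the hyperboloid
  have ht_pos : ∀ x : Fin 2 → ℝ, 0 < hyp s x 0 := by
    intro x
    show (0:ℝ) < Real.sqrt (s ^ 2 + (x 0) ^ 2 + (x 1) ^ 2)
    apply Real.sqrt_pos.mpr; positivity
  have ht_sq : ∀ x : Fin 2 → ℝ, (x 0)^2 + (x 1)^2 + s^2 = (hyp s x 0)^2 := by
    intro x
    show (x 0)^2 + (x 1)^2 + s^2 = (Real.sqrt (s ^ 2 + (x 0) ^ 2 + (x 1) ^ 2))^2
    rw [Real.sq_sqrt (by positivity)]; ring
  have hst : ∀ x : Fin 2 → ℝ, s ≤ hyp s x 0 := by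
    intro x
    have h1 := ht_sq x
    have h2 := ht_pos x
    nlinarith [sq_nonneg (x 0), sq_nonneg (x 1)]
  have honH : ∀ x : Fin 2 → ℝ, onH s (hyp s x) := by
    intro x
    constructor
    · have h1 := ht_sq x
      show (hyp s x 0)^2 - (x 0)^2 - (x 1)^2 = s^2
      linarith
    · exact ht_pos x
  -- derivatives vanish outside the cone
  have hφd := fderiv_zero_of_notK hφ hφ0
  have hvd := fderiv_zero_of_notK hv hv0
  have hφz : ∀ x : Fin 2 → ℝ, ¬ inK (hyp s x) → ∀ μ, pd μ φ (hyp s x) = 0 := by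
    intro x hK μ; unfold pd; rw [hφd _ hK]; rfl
  have hvz : ∀ x : Fin 2 → ℝ, ¬ inK (hyp s x) → ∀ μ, pd μ v (hyp s x) = 0 := by
    intro x hK μ; unfold pd; rw [hvd _ hK]; rfl
  -- the two integrands
  set F : (Fin 2 → ℝ) → ℝ := fun x => ∑ μ : Fin 3, ∑ ν : Fin 3, ∑ α : Fin 3, ∑ β : Fin 3,
      (eta μ ν * eta α β - eta μ α * eta ν β)
        * pd μ φ (hyp s x) * pd ν φ (hyp s x)
        * pd α v (hyp s x) * pd β v (hyp s x) with hFdef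
  set G : (Fin 2 → ℝ) → ℝ := fun x =>
      ((upd 1 v (hyp s x)) ^ 2 + (upd 2 v (hyp s x)) ^ 2
        + ((s / hyp s x 0) * pd 0 v (hyp s x)) ^ 2) with hGdef
  have hupd1 : ∀ x : Fin 2 → ℝ,
      upd 1 v (hyp s x) = (x 0)/(hyp s x 0) * pd 0 v (hyp s x) + pd 1 v (hyp s x) := by
    intro x
    show (if (1 : Fin 3) = 0 then _ else _) = _
    rw [if_neg (by decide)]
    rfl
  have hupd2 : ∀ x : Fin 2 → ℝ,
      upd 2 v (hyp s x) = (x 1)/(hyp s x 0) * pd 0 v (hyp s x) + pd 2 v (hyp s x) := by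
    intro x
    show (if (2 : Fin 3) = 0 then _ else _) = _
    rw [if_neg (by decide)]
    rfl
  have hupd1φ : ∀ x : Fin 2 → ℝ,
      upd 1 φ (hyp s x) = (x 0)/(hyp s x 0) * pd 0 φ (hyp s x) + pd 1 φ (hyp s x) := by
    intro x
    show (if (1 : Fin 3) = 0 then _ else _) = _
    rw [if_neg (by decide)]
    rfl
  have hupd2φ : ∀ x : Fin 2 → ℝ,
      upd 2 φ (hyp s x) = (x 1)/(hyp s x 0) * pd 0 φ (hyp s x) + pd 2 φ (hyp s x) := by
    intro x
    show (if (2 : Fin 3) = 0 then _ else _) = _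
    rw [if_neg (by decide)]
    rfl
  -- pointwise bound
  have hpt : ∀ x : Fin 2 → ℝ, |F x| ≤ 100 * A^2 / s^2 * G x := by
    intro x
    by_cases hK : inK (hyp s x)
    · obtain ⟨hB1, hB2⟩ := hb (hyp s x) (honH x) hK
      have hf0 : |s * pd 0 φ (hyp s x)| ≤ A := hB1 0
      have ha1 : |hyp s x 0 * ((x 0)/(hyp s x 0) * pd 0 φ (hyp s x) + pd 1 φ (hyp s x))| ≤ A := by
        have := hB2 1 (Or.inl rfl)
        rwa [hupd1φ x] at this
      have ha2 : |hyp s x 0 * ((x 1)/(hyp s x 0) * pd 0 φ (hyp s x) + pd 2 φ (hyp s x))| ≤ A := by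
        have := hB2 2 (Or.inr rfl)
        rwa [hupd2φ x] at this
      have hm := master_s11 s (hyp s x 0) (x 0) (x 1) A
        (pd 0 φ (hyp s x)) (pd 1 φ (hyp s x)) (pd 2 φ (hyp s x))
        (pd 0 v (hyp s x)) (pd 1 v (hyp s x)) (pd 2 v (hyp s x))
        hs0 (hst x) (ht_sq x) hf0 ha1 ha2
      rw [hFdef, hGdef]
      simp only
      rw [eta_expand, hupd1 x, hupd2 x]
      convert hm using 3 <;> ring
    · have hz := hφz x hK
      have hF0 : F x = 0 := by
        rw [hFdef]
        simp only
        rw [eta_expand, hz 0, hz 1, hz 2]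
        ring
      rw [hF0, abs_zero]
      have hG0 : 0 ≤ G x := by
        rw [hGdef]; positivity
      have : (0:ℝ) ≤ 100 * A^2 / s^2 := by positivity
      exact mul_nonneg this hG0
  -- continuity
  have hpdφc : ∀ μ, Continuous fun x : Fin 2 → ℝ => pd μ φ (hyp s x) :=
    fun μ => (pd_cont μ hφ).comp (hyp_cont s)
  have hpdvc : ∀ μ, Continuous fun x : Fin 2 → ℝ => pd μ v (hyp s x) :=
    fun μ => (pd_cont μ hv).comp (hyp_cont s)
  have ht0c : Continuous fun x : Fin 2 → ℝ => hyp s x 0 :=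
    (continuous_apply 0).comp (hyp_cont s)
  have htne : ∀ x : Fin 2 → ℝ, hyp s x 0 ≠ 0 := fun x => ne_of_gt (ht_pos x)
  have hFc : Continuous F := by
    rw [hFdef]
    apply continuous_finset_sum; intro μ _
    apply continuous_finset_sum; intro ν _
    apply continuous_finset_sum; intro α _
    apply continuous_finset_sum; intro β _
    exact ((((continuous_const.mul (hpdφc μ)).mul (hpdφc ν)).mul (hpdvc α)).mul (hpdvc β))
  have hGc : Continuous G := by
    rw [hGdef]
    have h1 : Continuous fun x : Fin 2 → ℝ => upd 1 v (hyp s x) := by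
      have : (fun x : Fin 2 → ℝ => upd 1 v (hyp s x))
          = fun x => (x 0)/(hyp s x 0) * pd 0 v (hyp s x) + pd 1 v (hyp s x) :=
        funext hupd1
      rw [this]
      exact (((continuous_apply 0).div ht0c htne).mul (hpdvc 0)).add (hpdvc 1)
    have h2 : Continuous fun x : Fin 2 → ℝ => upd 2 v (hyp s x) := by
      have : (fun x : Fin 2 → ℝ => upd 2 v (hyp s x))
          = fun x => (x 1)/(hyp s x 0) * pd 0 v (hyp s x) + pd 2 v (hyp s x) :=
        funext hupd2
      rw [this]
      exact (((continuous_apply 1).div ht0c htne).mul (hpdvc 0)).add (hpdvc 2)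
    have h3 : Continuous fun x : Fin 2 → ℝ => (s / hyp s x 0) * pd 0 v (hyp s x) :=
      ((continuous_const.div ht0c htne).mul (hpdvc 0))
    exact ((h1.pow 2).add (h2.pow 2)).add (h3.pow 2)
  -- compact support
  have hfar : ∀ x : Fin 2 → ℝ, x ∉ Metric.closedBall (0 : Fin 2 → ℝ) (s^2) →
      ¬ inK (hyp s x) := by
    intro x hx
    apply notK_far hs0
    have h1 : s^2 < ‖x‖ := by
      rw [Metric.mem_closedBall, dist_zero_right] at hx
      exact lt_of_not_ge hx
    exact le_trans (le_of_lt h1) (norm_le_r x)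
  have hFs : HasCompactSupport F := by
    apply HasCompactSupport.intro (isCompact_closedBall (0 : Fin 2 → ℝ) (s^2))
    intro x hx
    have hz := hφz x (hfar x hx)
    rw [hFdef]
    simp only
    rw [eta_expand, hz 0, hz 1, hz 2]
    ring
  have hGs : HasCompactSupport G := by
    apply HasCompactSupport.intro (isCompact_closedBall (0 : Fin 2 → ℝ) (s^2))
    intro x hx
    have hz := hvz x (hfar x hx)
    rw [hGdef]
    simp only
    rw [hupd1 x, hupd2 x, hz 0, hz 1, hz 2]
    ring
  have hFi : Integrable F := hFc.integrable_of_hasCompactSupport hFs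
  have hGi : Integrable G := hGc.integrable_of_hasCompactSupport hGs
  have hE0 : E0 s v = ∫ x : Fin 2 → ℝ, G x := rfl
  calc |∫ x : Fin 2 → ℝ, F x| ≤ ∫ x : Fin 2 → ℝ, |F x| := by
        simpa [Real.norm_eq_abs] using MeasureTheory.norm_integral_le_integral_norm (μ := volume) F
    _ ≤ ∫ x : Fin 2 → ℝ, 100 * A^2 / s^2 * G x := by
        apply integral_mono hFi.abs (hGi.const_mul _) hpt
    _ = 100 * A^2 / s^2 * ∫ x : Fin 2 → ℝ, G x := MeasureTheory.integral_const_mul _ _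
    _ = 100 * A ^ 2 / s ^ 2 * E0 s v := by rw [hE0]
end
end
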